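/- arXiv:1810.11894 — 6 statements merged into one kernel-verified Lean document; each statement's English description precedes it below -/
import Mathlib

section
/- Theorem (general method with entropy-production-like constants, antisymmetric increments). Assume in addition that 𝒥_{ij}(t) ≠ 0 for all (i,j) ∈ E and all t. Suppose Z_{ij} : ℝ → ℝ ((i,j) ∈ V × V) are continuous τ-periodic functions with Z_{ij}(t) = −Z_{ji}(t) for all i,j,t and identically zero when (i,j) ∉ E, and m_i : ℝ → ℝ (i ∈ V) are continuously differentiable τ-periodic functions with Σ_{i∈V} m_i(t) = 0 for all t, satisfying m_i'(t) + Σ_{j∈V} Z_{ij}(t) = 0 for all i and t, together with the normalization (1/τ)∫₀^τ [(1/2)Σ_{(i,j)∈V×V} α_{ij}(t)Z_{ij}(t) + Σ_{i∈V} γ_i(t)m_i(t)] dt = y_{α,γ}. Then limsup_{y→y_{α,γ}, y≠y_{α,γ}} I_{α,γ}(y)/(y − y_{α,γ})² ≤ (1/(8 y_{α,γ}²)) · Σ_{(i,j)∈E} (1/τ)∫₀^τ [(Z_{ij}(t) − (m_i(t)w_{ij}(t) − m_j(t)w_{ji}(t)))² / 𝒥_{ij}(t)] · log(𝒬_{ij}(t)/𝒬_{ji}(t))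 dt, where the limsup is taken in [0,∞]. -/
open MeasureTheory Filter
open scoped Topology ENNReal

/-!
Perturb the stationary pair `(π, 𝒬)` along `(m, ψ)`: `ρ = π + θ m`, `Q = 𝒬 + θ ψ`, where
`ψ_ij = m_i w_ij + c_ij` and `c_ij = C_ij 𝒬_ij / (𝒬_ij + 𝒬_ji)` shares the antisymmetric defect
`C_ij = Z_ij − (m_i w_ij − m_j w_ji)` between the two orientations of an edge. Then `(Q, ρ)` solves
the continuity equation, and by the antisymmetry of `α` and the normalisation of `(Z, m)` its
observable is `(1 + θ) y_{α,γ}`. Since `Φ(a, b) ≤ (a − b)² / (2 min(a, b))`, its cost is at most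
`θ² (1 + O(|θ|)) ∑ c² / (2 𝒬)`. On an edge pair `c²/(2𝒬)` sums to `C² / (2 (𝒬_ij + 𝒬_ji))`, and the
logarithmic mean is at most the arithmetic mean, `(q − p) / log (q / p) ≤ (q + p) / 2`, which
bounds this by the entropy-production weight `C² log (𝒬_ij / 𝒬_ji) / (4 𝒥_ij)`.
-/

/-- The function `Φ(q,p) = q log(q/p) − q + p` on `[0,∞) × [0,∞)` with values in `[0,∞]`,
with the conventions `Φ(0,p) = p` and `Φ(q,0) = ∞` for `q > 0`. -/
noncomputable def Phi (q p : ℝ) : ℝ≥0∞ :=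
  if q = 0 then ENNReal.ofReal p
  else if p = 0 then ⊤
  else ENNReal.ofReal (q * Real.log (q / p) - q + p)

namespace Real

lemma two_mul_sub_div_add_le_log_div {q p : ℝ} (hp : 0 < p) (hpq : p ≤ q) :
    2 * (q - p) / (q + p) ≤ log (q / p) := by
  have ha : 0 ≤ q / p - 1 := by rw [sub_nonneg, le_div_iff₀ hp]; linarith
  have h := le_hasSum (hasSum_log_one_add ha) 0 fun k _ => by positivity
  rw [add_sub_cancel] at h
  refine le_trans (le_of_eq ?_) h
  field_simp
  ring

lemma two_div_add_le_log_div_div_sub {q p : ℝ} (hq : 0 < q) (hp : 0 < p) (hqp : q ≠ p) :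
    2 / (q + p) ≤ log (q / p) / (q - p) := by
  wlog hlt : p < q generalizing q p
  · have h := this hp hq hqp.symm (lt_of_le_of_ne (not_lt.mp hlt) hqp)
    rw [add_comm] at h
    convert h using 1
    rw [← neg_div_neg_eq, ← log_inv, inv_div, neg_sub]
  rw [div_le_div_iff₀ (by positivity) (by linarith)]
  have := two_mul_sub_div_add_le_log_div hp hlt.le
  rw [div_le_iff₀ (by positivity)] at this
  linarith

lemma log_le_sub_inv_div_two {x : ℝ} (hx : 1 ≤ x) : log x ≤ (x - x⁻¹) / 2 := by
  rw [← sinh_log (by linarith)]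
  exact self_le_sinh_iff.mpr (log_nonneg hx)

lemma mul_log_div_sub_add_le {a b s : ℝ} (hs : 0 < s) (hsa : s ≤ a) (hsb : s ≤ b) :
    a * log (a / b) - a + b ≤ (a - b) ^ 2 / (2 * s) := by
  have ha : 0 < a := hs.trans_le hsa
  have hb : 0 < b := hs.trans_le hsb
  rcases le_total b a with hba | hab
  · have hlog := log_le_sub_inv_div_two ((one_le_div hb).mpr hba)
    calc a * log (a / b) - a + b ≤ a * ((a / b - (a / b)⁻¹) / 2) - a + b := by gcongr
      _ = (a - b) ^ 2 / (2 * b) := by field_simp; ring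
      _ ≤ (a - b) ^ 2 / (2 * s) := by gcongr
  · have hlog := two_mul_sub_div_add_le_log_div ha hab
    rw [← neg_le_neg_iff, ← log_inv, inv_div] at hlog
    calc a * log (a / b) - a + b ≤ a * -(2 * (b - a) / (b + a)) - a + b := by gcongr
      _ = (a - b) ^ 2 / (a + b) := by field_simp; ring
      _ ≤ (a - b) ^ 2 / (2 * s) := by gcongr; linarith

lemma sq_div_add_sq_div_le_log_div {q p C C' : ℝ} (hq : 0 < q) (hp : 0 < p) (hqp : q ≠ p)
    (hC : C' = -C) :
    (C * q / (q + p)) ^ 2 / (2 * q) + (C' * p / (p + q)) ^ 2 / (2 * p) ≤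
      (C ^ 2 / (q - p) * log (q / p) + C' ^ 2 / (p - q) * log (p / q)) / 8 := by
  have hlog := two_div_add_le_log_div_div_sub hq hp hqp
  have hswap : C' ^ 2 / (p - q) * log (p / q) = C ^ 2 * (log (q / p) / (q - p)) := by
    rw [hC, show log (p / q) = -log (q / p) by rw [← log_inv, inv_div]]
    field_simp
    ring
  rw [hswap]
  calc (C * q / (q + p)) ^ 2 / (2 * q) + (C' * p / (p + q)) ^ 2 / (2 * p)
      = C ^ 2 * (2 / (q + p)) / 4 := by rw [hC]; field_simp; ring
    _ ≤ C ^ 2 * (log (q / p) / (q - p)) / 4 := by gcongr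
    _ = _ := by ring

end Real

lemma sub_abs_mul_le_add_mul (a : ℝ) {θ x b : ℝ} (h : |x| ≤ b) : a - |θ| * b ≤ a + θ * x := by
  have h' := neg_abs_le (θ * x)
  rw [abs_mul] at h'
  nlinarith [abs_nonneg θ]

lemma Finset.sum_le_sum_of_add_swap_le {α β : Type*} [AddCommMonoid β] [LinearOrder β]
    [IsOrderedCancelAddMonoid β] {s : Finset (α × α)} (hs : ∀ a b, (a, b) ∈ s ↔ (b, a) ∈ s)
    {f g : α × α → β} (h : ∀ e ∈ s, f e + f e.swap ≤ g e + g e.swap) :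
    ∑ e ∈ s, f e ≤ ∑ e ∈ s, g e := by
  have hswap : ∀ F : α × α → β, ∑ e ∈ s, F e.swap = ∑ e ∈ s, F e := fun F =>
    Finset.sum_equiv (Equiv.prodComm α α) (fun e => hs e.1 e.2) fun _ _ => rfl
  have h2 := Finset.sum_le_sum h
  rw [Finset.sum_add_distrib, Finset.sum_add_distrib, hswap, hswap] at h2
  exact le_of_not_gt fun hlt => (add_lt_add hlt hlt).not_ge h2

lemma Finset.sum_sum_mul_eq_half_sum_sum_mul_sub {ι : Type*} [Fintype ι] {a x : ι → ι → ℝ}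
    (ha : ∀ i j, a i j = -a j i) :
    ∑ i, ∑ j, a i j * x i j = (1 / 2) * ∑ i, ∑ j, a i j * (x i j - x j i) := by
  have hswap : ∑ i, ∑ j, a i j * x j i = -∑ i, ∑ j, a i j * x i j := by
    rw [Finset.sum_comm]
    simp only [← Finset.sum_neg_distrib]
    refine Finset.sum_congr rfl fun i _ => Finset.sum_congr rfl fun j _ => ?_
    rw [ha]
    ring
  simp only [mul_sub, Finset.sum_sub_distrib, hswap]
  ring

lemma Function.Periodic.eventually_abs_le_mul {f g : ℝ → ℝ} {c : ℝ} (hc : c ≠ 0)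
    (hfp : Function.Periodic f c) (hgp : Function.Periodic g c) (hf : Continuous f)
    (hg : Continuous g) (hg0 : ∀ t, 0 < g t) :
    ∀ᶠ M in atTop, ∀ t, |f t| ≤ M * g t := by
  obtain ⟨C, hC⟩ := isBounded_iff_forall_norm_le.mp
    ((hfp.div hgp).isBounded_of_continuous hc (hf.div hg fun t => (hg0 t).ne'))
  filter_upwards [eventually_ge_atTop C] with M hM t
  have hfg : |f t / g t| ≤ M := (hC _ ⟨t, rfl⟩).trans hM
  rwa [abs_div, abs_of_pos (hg0 t), div_le_iff₀ (hg0 t)] at hfg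

lemma setLIntegral_Ioc_le_ofReal_intervalIntegral {F : ℝ → ℝ≥0∞} {g : ℝ → ℝ} {τ : ℝ}
    (hτ : 0 ≤ τ) (hg : Continuous g) (hg0 : ∀ t, 0 ≤ g t)
    (hF : ∀ t, F t ≤ ENNReal.ofReal (g t)) :
    ∫⁻ t in Set.Ioc 0 τ, F t ≤ ENNReal.ofReal (∫ t in (0:ℝ)..τ, g t) := by
  rw [intervalIntegral.integral_of_le hτ, ofReal_integral_eq_lintegral_ofReal
    hg.integrableOn_Ioc (ae_of_all _ hg0)]
  exact lintegral_mono hF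

lemma Phi_le_ofReal_sq_div {a b s : ℝ} (hs : 0 < s) (hsa : s ≤ a) (hsb : s ≤ b) :
    Phi a b ≤ ENNReal.ofReal ((a - b) ^ 2 / (2 * s)) := by
  rw [Phi, if_neg (hs.trans_le hsa).ne', if_neg (hs.trans_le hsb).ne']
  exact ENNReal.ofReal_le_ofReal (Real.mul_log_div_sub_add_le hs hsa hsb)

lemma limsup_div_sq_le_of_le {f : ℝ → ℝ≥0∞} {y0 K M : ℝ} (hy0 : y0 ≠ 0)
    (hf : ∀ θ, |θ| * M < 1 → f (y0 + θ * y0) ≤ ENNReal.ofReal (θ ^ 2 / (1 - |θ| * M) * K)) :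
    limsup (fun y => f y / ENNReal.ofReal ((y - y0) ^ 2)) (𝓝[≠] y0) ≤
      ENNReal.ofReal (K / y0 ^ 2) := by
  set u : ℝ → ℝ := fun y => |(y - y0) / y0| * M
  have hu : Tendsto u (𝓝 y0) (𝓝 0) := by
    have : Continuous u := ((continuous_id.sub continuous_const).div_const y0).abs.mul_const M
    simpa [u] using this.tendsto y0
  set g : ℝ → ℝ≥0∞ := fun y => ENNReal.ofReal (K / ((1 - u y) * y0 ^ 2))
  have hg : Tendsto g (𝓝[≠] y0) (𝓝 (ENNReal.ofReal (K / y0 ^ 2))) := by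
    refine (ENNReal.continuous_ofReal.tendsto _).comp (tendsto_nhdsWithin_of_tendsto_nhds ?_)
    have h := (tendsto_const_nhds (x := K)).div
      (((tendsto_const_nhds (x := (1 : ℝ))).sub hu).mul_const (y0 ^ 2)) (by simpa using hy0)
    simpa [Pi.div_def] using h
  have hfg : ∀ᶠ y in 𝓝[≠] y0, f y / ENNReal.ofReal ((y - y0) ^ 2) ≤ g y := by
    filter_upwards [self_mem_nhdsWithin,
      nhdsWithin_le_nhds (hu.eventually (gt_mem_nhds one_pos))] with y hy huy
    have hy' : y - y0 ≠ 0 := sub_ne_zero.mpr hy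
    have h := hf ((y - y0) / y0) huy
    rw [show y0 + (y - y0) / y0 * y0 = y by field_simp; ring] at h
    calc f y / ENNReal.ofReal ((y - y0) ^ 2)
        ≤ ENNReal.ofReal (((y - y0) / y0) ^ 2 / (1 - u y) * K) /
            ENNReal.ofReal ((y - y0) ^ 2) := ENNReal.div_le_div_right h _
      _ = g y := by
          rw [← ENNReal.ofReal_div_of_pos (by positivity)]
          congr 1
          field_simp
  exact (limsup_le_limsup hfg).trans_eq hg.limsup_eq

section PeriodicChain

variable {V : Type*}

/-- Minimises `c_ij² / 𝒬_ij + c_ji² / 𝒬_ji` subject to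
`c_ij − c_ji = Z_ij − (m_i w_ij − m_j w_ji)`. -/
noncomputable def fluxCorrection (w : V → V → ℝ → ℝ) (pi : V → ℝ → ℝ) (Z : V → V → ℝ → ℝ)
    (m : V → ℝ → ℝ) (i j : V) (t : ℝ) : ℝ :=
  (Z i j t - (m i t * w i j t - m j t * w j i t)) * (pi i t * w i j t) /
    (pi i t * w i j t + pi j t * w j i t)

noncomputable def tangentFlux (w : V → V → ℝ → ℝ) (pi : V → ℝ → ℝ) (Z : V → V → ℝ → ℝ)
    (m : V → ℝ → ℝ) (i j : V) (t : ℝ) : ℝ :=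
  m i t * w i j t + fluxCorrection w pi Z m i j t

def tiltDensity (pi m : V → ℝ → ℝ) (θ : ℝ) (i : V) (t : ℝ) : ℝ := pi i t + θ * m i t

noncomputable def tiltFlux (w : V → V → ℝ → ℝ) (pi : V → ℝ → ℝ) (Z : V → V → ℝ → ℝ)
    (m : V → ℝ → ℝ) (θ : ℝ) (i j : V) (t : ℝ) : ℝ :=
  pi i t * w i j t + θ * tangentFlux w pi Z m i j t

lemma le_tiltFlux {E : Finset (V × V)} {w : V → V → ℝ → ℝ} {pi : V → ℝ → ℝ}
    {Z : V → V → ℝ → ℝ} {m : V → ℝ → ℝ} {M : ℝ}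
    (hψ : ∀ i j, (i, j) ∈ E → ∀ t, |tangentFlux w pi Z m i j t| ≤ M * (pi i t * w i j t))
    {i j : V} (h : (i, j) ∈ E) (θ t : ℝ) :
    (1 - |θ| * M) * (pi i t * w i j t) ≤ tiltFlux w pi Z m θ i j t :=
  calc (1 - |θ| * M) * (pi i t * w i j t)
      = pi i t * w i j t - |θ| * (M * (pi i t * w i j t)) := by ring
    _ ≤ tiltFlux w pi Z m θ i j t := sub_abs_mul_le_add_mul _ (hψ i j h t)

lemma le_tiltDensity {pi m : V → ℝ → ℝ} {M : ℝ} (hm : ∀ i t, |m i t| ≤ M * pi i t)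
    (θ : ℝ) (i : V) (t : ℝ) : (1 - |θ| * M) * pi i t ≤ tiltDensity pi m θ i t :=
  calc (1 - |θ| * M) * pi i t = pi i t - |θ| * (M * pi i t) := by ring
    _ ≤ tiltDensity pi m θ i t := sub_abs_mul_le_add_mul _ (hm i t)

variable [Fintype V]

def ContinuityEquation (Q : V → V → ℝ → ℝ) (ρ : V → ℝ → ℝ) : Prop :=
  ∀ i t, deriv (ρ i) t + (∑ j, Q i j t) - (∑ j, Q j i t) = 0

lemma ContinuityEquation.add_smul {Q₁ Q₂ : V → V → ℝ → ℝ} {ρ₁ ρ₂ : V → ℝ → ℝ}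
    (h₁ : ContinuityEquation Q₁ ρ₁) (h₂ : ContinuityEquation Q₂ ρ₂)
    (hρ₁ : ∀ i, Differentiable ℝ (ρ₁ i)) (hρ₂ : ∀ i, Differentiable ℝ (ρ₂ i)) (θ : ℝ) :
    ContinuityEquation (fun i j t => Q₁ i j t + θ * Q₂ i j t)
      (fun i t => ρ₁ i t + θ * ρ₂ i t) := by
  intro i t
  have hd : deriv (fun s => ρ₁ i s + θ * ρ₂ i s) t = deriv (ρ₁ i) t + θ * deriv (ρ₂ i) t :=
    ((hρ₁ i t).hasDerivAt.add ((hρ₂ i t).hasDerivAt.const_mul θ)).deriv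
  simp only [hd, Finset.sum_add_distrib, ← Finset.mul_sum]
  linear_combination h₁ i t + θ * h₂ i t

noncomputable def observableMean (τ : ℝ) (α : V → V → ℝ → ℝ) (γ : V → ℝ → ℝ)
    (Q : V → V → ℝ → ℝ) (ρ : V → ℝ → ℝ) : ℝ :=
  (1 / τ) * (∫ t in (0:ℝ)..τ, ((∑ i, ∑ j, α i j t * Q i j t) + ∑ i, γ i t * ρ i t))

lemma observableMean_add_smul {τ : ℝ} {α : V → V → ℝ → ℝ} {γ : V → ℝ → ℝ}
    (hα : ∀ i j, Continuous (α i j)) (hγ : ∀ i, Continuous (γ i))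
    {Q₁ Q₂ : V → V → ℝ → ℝ} {ρ₁ ρ₂ : V → ℝ → ℝ}
    (hQ₁ : ∀ i j, Continuous (Q₁ i j)) (hQ₂ : ∀ i j, Continuous (Q₂ i j))
    (hρ₁ : ∀ i, Continuous (ρ₁ i)) (hρ₂ : ∀ i, Continuous (ρ₂ i)) (θ : ℝ) :
    observableMean τ α γ (fun i j t => Q₁ i j t + θ * Q₂ i j t)
        (fun i t => ρ₁ i t + θ * ρ₂ i t) =
      observableMean τ α γ Q₁ ρ₁ + θ * observableMean τ α γ Q₂ ρ₂ := by
  have hcont : ∀ (Q : V → V → ℝ → ℝ) (ρ : V → ℝ → ℝ), (∀ i j, Continuous (Q i j)) →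
      (∀ i, Continuous (ρ i)) →
      Continuous fun t => (∑ i, ∑ j, α i j t * Q i j t) + ∑ i, γ i t * ρ i t :=
    fun Q ρ hQ hρ => by fun_prop
  unfold observableMean
  simp only [mul_add, Finset.sum_add_distrib, mul_left_comm _ θ, ← Finset.mul_sum]
  rw [intervalIntegral.integral_congr (g := fun t => ((∑ i, ∑ j, α i j t * Q₁ i j t) +
      ∑ i, γ i t * ρ₁ i t) + θ * ((∑ i, ∑ j, α i j t * Q₂ i j t) + ∑ i, γ i t * ρ₂ i t))
      fun t _ => by ring,
    intervalIntegral.integral_add ((hcont Q₁ ρ₁ hQ₁ hρ₁).intervalIntegrable _ _)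
      (((hcont Q₂ ρ₂ hQ₂ hρ₂).const_mul θ).intervalIntegrable _ _),
    intervalIntegral.integral_const_mul]
  ring

noncomputable def pathCost (E : Finset (V × V)) (τ : ℝ) (w Q : V → V → ℝ → ℝ)
    (ρ : V → ℝ → ℝ) : ℝ≥0∞ :=
  ∑ e ∈ E, ENNReal.ofReal (1 / τ) *
    (∫⁻ t in Set.Ioc (0:ℝ) τ, Phi (Q e.1 e.2 t) (ρ e.1 t * w e.1 e.2 t))

noncomputable def rateFunction (E : Finset (V × V)) (τ : ℝ) (w α : V → V → ℝ → ℝ)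
    (γ : V → ℝ → ℝ) (y : ℝ) : ℝ≥0∞ :=
  sInf { c : ℝ≥0∞ |
    ∃ (Q : V → V → ℝ → ℝ) (ρ : V → ℝ → ℝ),
      (∀ i j, Continuous (Q i j)) ∧
      (∀ i j, Function.Periodic (Q i j) τ) ∧
      (∀ i j t, 0 ≤ Q i j t) ∧
      (∀ i j, (i, j) ∉ E → ∀ t, Q i j t = 0) ∧
      (∀ i, ContDiff ℝ 1 (ρ i)) ∧
      (∀ i, Function.Periodic (ρ i) τ) ∧
      (∀ i t, 0 ≤ ρ i t) ∧
      (∀ t : ℝ, ∑ i, ρ i t = 1) ∧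
      ContinuityEquation Q ρ ∧
      observableMean τ α γ Q ρ = y ∧
      c = pathCost E τ w Q ρ }

noncomputable def correctionCost (E : Finset (V × V)) (τ : ℝ) (w : V → V → ℝ → ℝ)
    (pi : V → ℝ → ℝ) (Z : V → V → ℝ → ℝ) (m : V → ℝ → ℝ) : ℝ :=
  ∑ e ∈ E, (1 / τ) * ∫ t in (0:ℝ)..τ,
    fluxCorrection w pi Z m e.1 e.2 t ^ 2 / (2 * (pi e.1 t * w e.1 e.2 t))

structure IsPeriodicSteadyState (E : Finset (V × V)) (τ : ℝ) (w : V → V → ℝ → ℝ)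
    (pi : V → ℝ → ℝ) : Prop where
  mem_swap : ∀ i j, (i, j) ∈ E ↔ (j, i) ∈ E
  continuous_w : ∀ i j, Continuous (w i j)
  periodic_w : ∀ i j, Function.Periodic (w i j) τ
  w_pos : ∀ i j, (i, j) ∈ E → ∀ t, 0 < w i j t
  w_eq_zero : ∀ i j, (i, j) ∉ E → ∀ t, w i j t = 0
  contDiff_pi : ∀ i, ContDiff ℝ 1 (pi i)
  periodic_pi : ∀ i, Function.Periodic (pi i) τ
  pi_pos : ∀ i t, 0 < pi i t
  sum_pi : ∀ t, ∑ i, pi i t = 1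
  continuityEquation : ContinuityEquation (fun i j t => pi i t * w i j t) pi

structure IsTangentCurrent (E : Finset (V × V)) (τ : ℝ) (Z : V → V → ℝ → ℝ)
    (m : V → ℝ → ℝ) : Prop where
  continuous_Z : ∀ i j, Continuous (Z i j)
  periodic_Z : ∀ i j, Function.Periodic (Z i j) τ
  Z_antisymm : ∀ i j t, Z i j t = -Z j i t
  Z_eq_zero : ∀ i j, (i, j) ∉ E → ∀ t, Z i j t = 0
  contDiff_m : ∀ i, ContDiff ℝ 1 (m i)
  periodic_m : ∀ i, Function.Periodic (m i) τ
  sum_m : ∀ t, ∑ i, m i t = 0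
  deriv_add_sum_Z : ∀ i t, deriv (m i) t + ∑ j, Z i j t = 0

variable {E : Finset (V × V)} {τ : ℝ} {w : V → V → ℝ → ℝ} {pi : V → ℝ → ℝ}
  {Z : V → V → ℝ → ℝ} {m : V → ℝ → ℝ}

lemma IsTangentCurrent.continuous_m (hT : IsTangentCurrent E τ Z m) (i : V) :
    Continuous (m i) :=
  (hT.contDiff_m i).continuous

namespace IsPeriodicSteadyState

lemma continuous_pi (hP : IsPeriodicSteadyState E τ w pi) (i : V) : Continuous (pi i) :=
  (hP.contDiff_pi i).continuous

lemma w_nonneg (hP : IsPeriodicSteadyState E τ w pi) (i j : V) (t : ℝ) : 0 ≤ w i j t := by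
  by_cases h : (i, j) ∈ E
  · exact (hP.w_pos i j h t).le
  · exact (hP.w_eq_zero i j h t).ge

lemma flux_pos (hP : IsPeriodicSteadyState E τ w pi) {i j : V} (h : (i, j) ∈ E) (t : ℝ) :
    0 < pi i t * w i j t :=
  mul_pos (hP.pi_pos i t) (hP.w_pos i j h t)

lemma flux_add_flux_swap_pos (hP : IsPeriodicSteadyState E τ w pi) {i j : V} (h : (i, j) ∈ E)
    (t : ℝ) : 0 < pi i t * w i j t + pi j t * w j i t :=
  add_pos_of_pos_of_nonneg (hP.flux_pos h t) (mul_nonneg (hP.pi_pos j t).le (hP.w_nonneg j i t))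

lemma continuous_flux (hP : IsPeriodicSteadyState E τ w pi) (i j : V) :
    Continuous fun t => pi i t * w i j t :=
  (hP.continuous_pi i).mul (hP.continuous_w i j)

lemma periodic_flux (hP : IsPeriodicSteadyState E τ w pi) (i j : V) :
    Function.Periodic (fun t => pi i t * w i j t) τ :=
  (hP.periodic_pi i).mul (hP.periodic_w i j)

lemma continuous_defect (hP : IsPeriodicSteadyState E τ w pi) (hT : IsTangentCurrent E τ Z m)
    (i j : V) : Continuous fun t => Z i j t - (m i t * w i j t - m j t * w j i t) :=
  (hT.continuous_Z i j).sub (((hT.continuous_m i).mul (hP.continuous_w i j)).sub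
    ((hT.continuous_m j).mul (hP.continuous_w j i)))

lemma fluxCorrection_of_notMem (hP : IsPeriodicSteadyState E τ w pi) {i j : V}
    (h : (i, j) ∉ E) (t : ℝ) : fluxCorrection w pi Z m i j t = 0 := by
  simp [fluxCorrection, hP.w_eq_zero i j h t]

lemma tangentFlux_of_notMem (hP : IsPeriodicSteadyState E τ w pi) {i j : V} (h : (i, j) ∉ E)
    (t : ℝ) : tangentFlux w pi Z m i j t = 0 := by
  simp [tangentFlux, hP.fluxCorrection_of_notMem h, hP.w_eq_zero i j h t]

lemma tiltFlux_of_notMem (hP : IsPeriodicSteadyState E τ w pi) {i j : V} (h : (i, j) ∉ E)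
    (θ t : ℝ) : tiltFlux w pi Z m θ i j t = 0 := by
  simp [tiltFlux, hP.w_eq_zero i j h t, hP.tangentFlux_of_notMem h]

lemma continuous_fluxCorrection (hP : IsPeriodicSteadyState E τ w pi)
    (hT : IsTangentCurrent E τ Z m) (i j : V) : Continuous (fluxCorrection w pi Z m i j) := by
  by_cases h : (i, j) ∈ E
  · exact ((hP.continuous_defect hT i j).mul (hP.continuous_flux i j)).div
      ((hP.continuous_flux i j).add (hP.continuous_flux j i))
      fun t => (hP.flux_add_flux_swap_pos h t).ne'
  · rw [show fluxCorrection w pi Z m i j = 0 from funext (hP.fluxCorrection_of_notMem h)]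
    exact continuous_const

lemma continuous_fluxCorrection_sq_div (hP : IsPeriodicSteadyState E τ w pi)
    (hT : IsTangentCurrent E τ Z m) {i j : V} (h : (i, j) ∈ E) :
    Continuous fun t => fluxCorrection w pi Z m i j t ^ 2 / (2 * (pi i t * w i j t)) :=
  ((hP.continuous_fluxCorrection hT i j).pow 2).div
    (continuous_const.mul (hP.continuous_flux i j)) fun t =>
      mul_ne_zero two_ne_zero (hP.flux_pos h t).ne'

lemma continuous_tangentFlux (hP : IsPeriodicSteadyState E τ w pi)
    (hT : IsTangentCurrent E τ Z m) (i j : V) : Continuous (tangentFlux w pi Z m i j) :=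
  ((hT.continuous_m i).mul (hP.continuous_w i j)).add (hP.continuous_fluxCorrection hT i j)

lemma periodic_tangentFlux (hP : IsPeriodicSteadyState E τ w pi)
    (hT : IsTangentCurrent E τ Z m) (i j : V) :
    Function.Periodic (tangentFlux w pi Z m i j) τ := by
  intro t
  simp only [tangentFlux, fluxCorrection, hT.periodic_Z i j t, hT.periodic_m i t,
    hT.periodic_m j t, hP.periodic_w i j t, hP.periodic_w j i t, hP.periodic_pi i t,
    hP.periodic_pi j t]

lemma tangentFlux_sub_swap (hP : IsPeriodicSteadyState E τ w pi)
    (hT : IsTangentCurrent E τ Z m) (i j : V) (t : ℝ) :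
    tangentFlux w pi Z m i j t - tangentFlux w pi Z m j i t = Z i j t := by
  by_cases h : (i, j) ∈ E
  · set C := Z i j t - (m i t * w i j t - m j t * w j i t)
    set D := pi i t * w i j t + pi j t * w j i t
    have hC : Z j i t - (m j t * w j i t - m i t * w i j t) = -C := by
      rw [hT.Z_antisymm j i t]; ring
    have hsplit : C * (pi i t * w i j t) / D + C * (pi j t * w j i t) / D = C := by
      rw [← add_div, ← mul_add, mul_div_assoc, div_self (hP.flux_add_flux_swap_pos h t).ne',
        mul_one]
    rw [tangentFlux, tangentFlux, fluxCorrection, fluxCorrection, hC,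
      add_comm (pi j t * w j i t), neg_mul, neg_div]
    linarith
  · have h' : (j, i) ∉ E := fun h' => h ((hP.mem_swap j i).mp h')
    rw [hP.tangentFlux_of_notMem h, hP.tangentFlux_of_notMem h', hT.Z_eq_zero i j h t,
      sub_zero]

lemma continuityEquation_tangentFlux (hP : IsPeriodicSteadyState E τ w pi)
    (hT : IsTangentCurrent E τ Z m) : ContinuityEquation (tangentFlux w pi Z m) m := by
  intro i t
  rw [add_sub_assoc, ← Finset.sum_sub_distrib]
  simp only [hP.tangentFlux_sub_swap hT]
  exact hT.deriv_add_sum_Z i t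

lemma observableMean_tangentFlux (hP : IsPeriodicSteadyState E τ w pi)
    (hT : IsTangentCurrent E τ Z m) {α : V → V → ℝ → ℝ} (hα : ∀ i j t, α i j t = -α j i t)
    (γ : V → ℝ → ℝ) :
    observableMean τ α γ (tangentFlux w pi Z m) m = (1 / τ) * (∫ t in (0:ℝ)..τ,
      ((1 / 2) * (∑ i, ∑ j, α i j t * Z i j t) + ∑ i, γ i t * m i t)) := by
  unfold observableMean
  congr 2 with t
  rw [Finset.sum_sum_mul_eq_half_sum_sum_mul_sub fun i j => hα i j t]
  simp only [hP.tangentFlux_sub_swap hT]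

lemma exists_abs_tangent_le_mul (hP : IsPeriodicSteadyState E τ w pi)
    (hT : IsTangentCurrent E τ Z m) (hτ : τ ≠ 0) :
    ∃ M, (∀ i t, |m i t| ≤ M * pi i t) ∧
      ∀ i j, (i, j) ∈ E → ∀ t, |tangentFlux w pi Z m i j t| ≤ M * (pi i t * w i j t) := by
  have hm : ∀ᶠ M in atTop, ∀ i t, |m i t| ≤ M * pi i t :=
    eventually_all.2 fun i => (hT.periodic_m i).eventually_abs_le_mul hτ (hP.periodic_pi i)
      (hT.continuous_m i) (hP.continuous_pi i) (hP.pi_pos i)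
  have hψ : ∀ᶠ M in atTop, ∀ e ∈ E, ∀ t,
      |tangentFlux w pi Z m e.1 e.2 t| ≤ M * (pi e.1 t * w e.1 e.2 t) :=
    (eventually_all_finset E).2 fun e he =>
      (hP.periodic_tangentFlux hT e.1 e.2).eventually_abs_le_mul hτ (hP.periodic_flux e.1 e.2)
        (hP.continuous_tangentFlux hT e.1 e.2) (hP.continuous_flux e.1 e.2) (hP.flux_pos he)
  obtain ⟨M, hMm, hMψ⟩ := (hm.and hψ).exists
  exact ⟨M, hMm, fun i j h => hMψ (i, j) h⟩

lemma le_tiltDensity_mul (hP : IsPeriodicSteadyState E τ w pi) {M : ℝ}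
    (hm : ∀ i t, |m i t| ≤ M * pi i t) (θ : ℝ) (i j : V) (t : ℝ) :
    (1 - |θ| * M) * (pi i t * w i j t) ≤ tiltDensity pi m θ i t * w i j t := by
  simpa only [mul_assoc] using
    mul_le_mul_of_nonneg_right (le_tiltDensity hm θ i t) (hP.w_nonneg i j t)

lemma tiltFlux_nonneg (hP : IsPeriodicSteadyState E τ w pi) {M θ : ℝ}
    (hψ : ∀ i j, (i, j) ∈ E → ∀ t, |tangentFlux w pi Z m i j t| ≤ M * (pi i t * w i j t))
    (hθ : |θ| * M ≤ 1) (i j : V) (t : ℝ) : 0 ≤ tiltFlux w pi Z m θ i j t := by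
  by_cases h : (i, j) ∈ E
  · exact (mul_nonneg (sub_nonneg.mpr hθ) (hP.flux_pos h t).le).trans (le_tiltFlux hψ h θ t)
  · exact (hP.tiltFlux_of_notMem h θ t).ge

lemma continuityEquation_tilt (hP : IsPeriodicSteadyState E τ w pi)
    (hT : IsTangentCurrent E τ Z m) (θ : ℝ) :
    ContinuityEquation (tiltFlux w pi Z m θ) (tiltDensity pi m θ) :=
  hP.continuityEquation.add_smul (hP.continuityEquation_tangentFlux hT)
    (fun i => (hP.contDiff_pi i).differentiable one_ne_zero)
    (fun i => (hT.contDiff_m i).differentiable one_ne_zero) θ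

lemma observableMean_tilt (hP : IsPeriodicSteadyState E τ w pi) (hT : IsTangentCurrent E τ Z m)
    {α : V → V → ℝ → ℝ} {γ : V → ℝ → ℝ} (hα_cont : ∀ i j, Continuous (α i j))
    (hα_anti : ∀ i j t, α i j t = -α j i t) (hγ_cont : ∀ i, Continuous (γ i)) {y0 : ℝ}
    (hy0 : observableMean τ α γ (fun i j t => pi i t * w i j t) pi = y0)
    (hnorm : (1 / τ) * (∫ t in (0:ℝ)..τ,
      ((1 / 2) * (∑ i, ∑ j, α i j t * Z i j t) + ∑ i, γ i t * m i t)) = y0) (θ : ℝ) :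
    observableMean τ α γ (tiltFlux w pi Z m θ) (tiltDensity pi m θ) = y0 + θ * y0 :=
  calc observableMean τ α γ (tiltFlux w pi Z m θ) (tiltDensity pi m θ)
      = observableMean τ α γ (fun i j t => pi i t * w i j t) pi +
          θ * observableMean τ α γ (tangentFlux w pi Z m) m :=
        observableMean_add_smul hα_cont hγ_cont hP.continuous_flux (hP.continuous_tangentFlux hT)
          hP.continuous_pi hT.continuous_m θ
    _ = y0 + θ * y0 := by rw [hP.observableMean_tangentFlux hT hα_anti, hy0, hnorm]

lemma rateFunction_le_pathCost_tilt (hP : IsPeriodicSteadyState E τ w pi)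
    (hT : IsTangentCurrent E τ Z m) {α : V → V → ℝ → ℝ} {γ : V → ℝ → ℝ}
    (hα_cont : ∀ i j, Continuous (α i j)) (hα_anti : ∀ i j t, α i j t = -α j i t)
    (hγ_cont : ∀ i, Continuous (γ i)) {y0 M θ : ℝ}
    (hy0 : observableMean τ α γ (fun i j t => pi i t * w i j t) pi = y0)
    (hnorm : (1 / τ) * (∫ t in (0:ℝ)..τ,
      ((1 / 2) * (∑ i, ∑ j, α i j t * Z i j t) + ∑ i, γ i t * m i t)) = y0)
    (hm : ∀ i t, |m i t| ≤ M * pi i t)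
    (hψ : ∀ i j, (i, j) ∈ E → ∀ t, |tangentFlux w pi Z m i j t| ≤ M * (pi i t * w i j t))
    (hθ : |θ| * M ≤ 1) :
    rateFunction E τ w α γ (y0 + θ * y0) ≤
      pathCost E τ w (tiltFlux w pi Z m θ) (tiltDensity pi m θ) := by
  refine sInf_le ⟨_, _, fun i j => ?_, fun i j t => ?_, hP.tiltFlux_nonneg hψ hθ,
    fun i j h => hP.tiltFlux_of_notMem h θ, fun i => ?_, fun i t => ?_,
    fun i t => ?_, fun t => ?_, hP.continuityEquation_tilt hT θ,
    hP.observableMean_tilt hT hα_cont hα_anti hγ_cont hy0 hnorm θ, rfl⟩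
  · exact (hP.continuous_flux i j).add (continuous_const.mul (hP.continuous_tangentFlux hT i j))
  · simp only [tiltFlux, hP.periodic_pi i t, hP.periodic_w i j t,
      hP.periodic_tangentFlux hT i j t]
  · exact (hP.contDiff_pi i).add (contDiff_const.mul (hT.contDiff_m i))
  · simp only [tiltDensity, hP.periodic_pi i t, hT.periodic_m i t]
  · exact (mul_nonneg (sub_nonneg.mpr hθ) (hP.pi_pos i t).le).trans (le_tiltDensity hm θ i t)
  · simp only [tiltDensity, Finset.sum_add_distrib, ← Finset.mul_sum, hP.sum_pi t, hT.sum_m t,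
      mul_zero, add_zero]

lemma Phi_tiltFlux_le (hP : IsPeriodicSteadyState E τ w pi) {M θ : ℝ}
    (hm : ∀ i t, |m i t| ≤ M * pi i t)
    (hψ : ∀ i j, (i, j) ∈ E → ∀ t, |tangentFlux w pi Z m i j t| ≤ M * (pi i t * w i j t))
    (hθ : |θ| * M < 1) {i j : V} (h : (i, j) ∈ E) (t : ℝ) :
    Phi (tiltFlux w pi Z m θ i j t) (tiltDensity pi m θ i t * w i j t) ≤
      ENNReal.ofReal (θ ^ 2 / (1 - |θ| * M) *
        (fluxCorrection w pi Z m i j t ^ 2 / (2 * (pi i t * w i j t)))) := by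
  have hu : 0 < 1 - |θ| * M := sub_pos.mpr hθ
  have hq := hP.flux_pos h t
  have hdiff : tiltFlux w pi Z m θ i j t - tiltDensity pi m θ i t * w i j t =
      θ * fluxCorrection w pi Z m i j t := by
    simp only [tiltFlux, tiltDensity, tangentFlux]; ring
  calc _ ≤ _ := Phi_le_ofReal_sq_div (by positivity) (le_tiltFlux hψ h θ t)
        (hP.le_tiltDensity_mul hm θ i j t)
    _ = _ := by rw [hdiff]; congr 1; field_simp

lemma pathCost_tilt_le (hP : IsPeriodicSteadyState E τ w pi) (hT : IsTangentCurrent E τ Z m)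
    (hτ : 0 < τ) {M θ : ℝ} (hm : ∀ i t, |m i t| ≤ M * pi i t)
    (hψ : ∀ i j, (i, j) ∈ E → ∀ t, |tangentFlux w pi Z m i j t| ≤ M * (pi i t * w i j t))
    (hθ : |θ| * M < 1) :
    pathCost E τ w (tiltFlux w pi Z m θ) (tiltDensity pi m θ) ≤
      ENNReal.ofReal (θ ^ 2 / (1 - |θ| * M) * correctionCost E τ w pi Z m) := by
  have hu : 0 < 1 - |θ| * M := sub_pos.mpr hθ
  have hk : ∀ e ∈ E, ∀ t,
      0 ≤ fluxCorrection w pi Z m e.1 e.2 t ^ 2 / (2 * (pi e.1 t * w e.1 e.2 t)) :=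
    fun e he t => by have := hP.flux_pos he t; positivity
  unfold pathCost correctionCost
  rw [Finset.mul_sum, ENNReal.ofReal_sum_of_nonneg fun e he => mul_nonneg (by positivity)
    (mul_nonneg (by positivity) (intervalIntegral.integral_nonneg hτ.le fun t _ => hk e he t))]
  refine Finset.sum_le_sum fun e he => ?_
  calc ENNReal.ofReal (1 / τ) * ∫⁻ t in Set.Ioc 0 τ,
        Phi (tiltFlux w pi Z m θ e.1 e.2 t) (tiltDensity pi m θ e.1 t * w e.1 e.2 t)
      ≤ ENNReal.ofReal (1 / τ) * ENNReal.ofReal (∫ t in (0:ℝ)..τ, θ ^ 2 / (1 - |θ| * M) *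
          (fluxCorrection w pi Z m e.1 e.2 t ^ 2 / (2 * (pi e.1 t * w e.1 e.2 t)))) := by
        gcongr
        exact setLIntegral_Ioc_le_ofReal_intervalIntegral hτ.le
          (continuous_const.mul (hP.continuous_fluxCorrection_sq_div hT he))
          (fun t => mul_nonneg (by positivity) (hk e he t)) (hP.Phi_tiltFlux_le hm hψ hθ he)
    _ = _ := by
        rw [← ENNReal.ofReal_mul (by positivity), intervalIntegral.integral_const_mul]
        ring_nf

lemma correctionCost_le (hP : IsPeriodicSteadyState E τ w pi) (hT : IsTangentCurrent E τ Z m)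
    (hτ : 0 < τ) (hJ : ∀ i j, (i, j) ∈ E → ∀ t, pi i t * w i j t - pi j t * w j i t ≠ 0) :
    correctionCost E τ w pi Z m ≤ (1 / 8) * ∑ e ∈ E, (1 / τ) * (∫ t in (0:ℝ)..τ,
      ((Z e.1 e.2 t - (m e.1 t * w e.1 e.2 t - m e.2 t * w e.2 e.1 t)) ^ 2
          / (pi e.1 t * w e.1 e.2 t - pi e.2 t * w e.2 e.1 t)) *
        Real.log ((pi e.1 t * w e.1 e.2 t) / (pi e.2 t * w e.2 e.1 t))) := by
  set k : V → V → ℝ → ℝ := fun i j t =>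
    fluxCorrection w pi Z m i j t ^ 2 / (2 * (pi i t * w i j t))
  set s : V → V → ℝ → ℝ := fun i j t =>
    ((Z i j t - (m i t * w i j t - m j t * w j i t)) ^ 2 /
      (pi i t * w i j t - pi j t * w j i t)) * Real.log ((pi i t * w i j t) / (pi j t * w j i t))
  have hs : ∀ i j, (i, j) ∈ E → Continuous (s i j) := fun i j h =>
    have h' := (hP.mem_swap i j).mp h
    (((hP.continuous_defect hT i j).pow 2).div
      ((hP.continuous_flux i j).sub (hP.continuous_flux j i)) (hJ i j h)).mul
      (((hP.continuous_flux i j).div (hP.continuous_flux j i) fun t =>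
        (hP.flux_pos h' t).ne').log fun t => (div_pos (hP.flux_pos h t) (hP.flux_pos h' t)).ne')
  unfold correctionCost
  rw [Finset.mul_sum]
  refine Finset.sum_le_sum_of_add_swap_le hP.mem_swap fun ⟨i, j⟩ h => ?_
  have h' := (hP.mem_swap i j).mp h
  have hk_ij := hP.continuous_fluxCorrection_sq_div hT h
  have hk_ji := hP.continuous_fluxCorrection_sq_div hT h'
  have hpt : ∀ t, k i j t + k j i t ≤ (s i j t + s j i t) / 8 := fun t =>
    Real.sq_div_add_sq_div_le_log_div (hP.flux_pos h t) (hP.flux_pos h' t)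
      (sub_ne_zero.mp (hJ i j h t)) (by rw [hT.Z_antisymm j i t]; ring)
  have hint : ∫ t in (0:ℝ)..τ, (k i j t + k j i t) ≤ ∫ t in (0:ℝ)..τ, (s i j t + s j i t) / 8 :=
    intervalIntegral.integral_mono_on hτ.le ((hk_ij.add hk_ji).intervalIntegrable 0 τ)
      ((((hs i j h).add (hs j i h')).div_const (8 : ℝ)).intervalIntegrable 0 τ) fun t _ => hpt t
  rw [intervalIntegral.integral_add (hk_ij.intervalIntegrable 0 τ)
      (hk_ji.intervalIntegrable 0 τ), intervalIntegral.integral_div,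
    intervalIntegral.integral_add ((hs i j h).intervalIntegrable 0 τ)
      ((hs j i h').intervalIntegrable 0 τ)] at hint
  have := mul_le_mul_of_nonneg_left hint (one_div_pos.mpr hτ).le
  simp only [Prod.swap_prod_mk]
  linarith

end IsPeriodicSteadyState

end PeriodicChain

theorem stmt6_general
    {V : Type} [Fintype V]
    (E : Finset (V × V))
    (hE_symm : ∀ i j : V, (i, j) ∈ E ↔ (j, i) ∈ E)
    (τ : ℝ) (hτ : 0 < τ)
    (w : V → V → ℝ → ℝ)
    (hw_cont : ∀ i j, Continuous (w i j))
    (hw_per : ∀ i j, Function.Periodic (w i j) τ)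
    (hw_pos : ∀ i j, (i, j) ∈ E → ∀ t, 0 < w i j t)
    (hw_zero : ∀ i j, (i, j) ∉ E → ∀ t, w i j t = 0)
    (pi : V → ℝ → ℝ)
    (hpi_diff : ∀ i, ContDiff ℝ 1 (pi i))
    (hpi_per : ∀ i, Function.Periodic (pi i) τ)
    (hpi_pos : ∀ i t, 0 < pi i t)
    (hpi_sum : ∀ t : ℝ, ∑ i, pi i t = 1)
    (hpi_cont_eq : ∀ i t, deriv (pi i) t
      + (∑ j, pi i t * w i j t) - (∑ j, pi j t * w j i t) = 0)
    (hJ_ne : ∀ i j, (i, j) ∈ E → ∀ t : ℝ,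
      pi i t * w i j t - pi j t * w j i t ≠ 0)
    (α : V → V → ℝ → ℝ)
    (hα_cont : ∀ i j, Continuous (α i j))
    (hα_anti : ∀ i j (t : ℝ), α i j t = - α j i t)
    (γ : V → ℝ → ℝ)
    (hγ_cont : ∀ i, Continuous (γ i))
    (y0 : ℝ)
    (hy0 : y0 = (1 / τ) * (∫ t in (0:ℝ)..τ,
      ((∑ i, ∑ j, α i j t * (pi i t * w i j t)) + ∑ i, γ i t * pi i t)))
    (hy0_ne : y0 ≠ 0)
    (Iag : ℝ → ℝ≥0∞)
    (hI : ∀ y : ℝ, Iag y = sInf { c : ℝ≥0∞ |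
      ∃ (Q : V → V → ℝ → ℝ) (ρ : V → ℝ → ℝ),
        (∀ i j, Continuous (Q i j)) ∧
        (∀ i j, Function.Periodic (Q i j) τ) ∧
        (∀ i j t, 0 ≤ Q i j t) ∧
        (∀ i j, (i, j) ∉ E → ∀ t, Q i j t = 0) ∧
        (∀ i, ContDiff ℝ 1 (ρ i)) ∧
        (∀ i, Function.Periodic (ρ i) τ) ∧
        (∀ i t, 0 ≤ ρ i t) ∧
        (∀ t : ℝ, ∑ i, ρ i t = 1) ∧
        (∀ i t, deriv (ρ i) t + (∑ j, Q i j t) - (∑ j, Q j i t) = 0) ∧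
        ((1 / τ) * (∫ t in (0:ℝ)..τ,
          ((∑ i, ∑ j, α i j t * Q i j t) + ∑ i, γ i t * ρ i t)) = y) ∧
        c = ∑ e ∈ E, ENNReal.ofReal (1 / τ) *
          (∫⁻ t in Set.Ioc (0:ℝ) τ, Phi (Q e.1 e.2 t) (ρ e.1 t * w e.1 e.2 t)) })
    -- the legal input (Z, m)
    (Z : V → V → ℝ → ℝ)
    (hZ_cont : ∀ i j, Continuous (Z i j))
    (hZ_per : ∀ i j, Function.Periodic (Z i j) τ)
    (hZ_anti : ∀ i j (t : ℝ), Z i j t = - Z j i t)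
    (hZ_zero : ∀ i j, (i, j) ∉ E → ∀ t, Z i j t = 0)
    (m : V → ℝ → ℝ)
    (hm_diff : ∀ i, ContDiff ℝ 1 (m i))
    (hm_per : ∀ i, Function.Periodic (m i) τ)
    (hm_sum : ∀ t : ℝ, ∑ i, m i t = 0)
    (hm_cont_eq : ∀ i (t : ℝ), deriv (m i) t + (∑ j, Z i j t) = 0)
    (h_norm : (1 / τ) * (∫ t in (0:ℝ)..τ,
      ((1 / 2) * (∑ i, ∑ j, α i j t * Z i j t) + ∑ i, γ i t * m i t)) = y0) :
    Filter.limsup (fun y : ℝ => Iag y / ENNReal.ofReal ((y - y0) ^ 2)) (𝓝[≠] y0)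
      ≤ ENNReal.ofReal ((1 / (8 * y0 ^ 2)) *
          ∑ e ∈ E, (1 / τ) * (∫ t in (0:ℝ)..τ,
            ((Z e.1 e.2 t - (m e.1 t * w e.1 e.2 t - m e.2 t * w e.2 e.1 t)) ^ 2
                / (pi e.1 t * w e.1 e.2 t - pi e.2 t * w e.2 e.1 t)) *
              Real.log ((pi e.1 t * w e.1 e.2 t) / (pi e.2 t * w e.2 e.1 t)))) := by
  have hP : IsPeriodicSteadyState E τ w pi :=
    ⟨hE_symm, hw_cont, hw_per, hw_pos, hw_zero, hpi_diff, hpi_per, hpi_pos, hpi_sum, hpi_cont_eq⟩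
  have hT : IsTangentCurrent E τ Z m :=
    ⟨hZ_cont, hZ_per, hZ_anti, hZ_zero, hm_diff, hm_per, hm_sum, hm_cont_eq⟩
  obtain ⟨M, hMm, hMψ⟩ := hP.exists_abs_tangent_le_mul hT hτ.ne'
  have hIag : Iag = rateFunction E τ w α γ := funext hI
  have hcost : ∀ θ, |θ| * M < 1 → Iag (y0 + θ * y0) ≤
      ENNReal.ofReal (θ ^ 2 / (1 - |θ| * M) * correctionCost E τ w pi Z m) := fun θ hθ =>
    hIag ▸ (hP.rateFunction_le_pathCost_tilt hT hα_cont hα_anti hγ_cont hy0.symm h_norm hMm hMψ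
      hθ.le).trans (hP.pathCost_tilt_le hT hτ hMm hMψ hθ)
  refine (limsup_div_sq_le_of_le hy0_ne hcost).trans (ENNReal.ofReal_le_ofReal ?_)
  exact (div_le_div_of_nonneg_right (hP.correctionCost_le hT hτ hJ_ne) (sq_nonneg y0)).trans_eq
    (by ring)

theorem stmt6
    {V : Type} [Fintype V] [Nonempty V]
    (E : Finset (V × V)) (hE : ∀ i : V, (i, i) ∉ E)
    (hE_symm : ∀ i j : V, (i, j) ∈ E ↔ (j, i) ∈ E)
    (τ : ℝ) (hτ : 0 < τ)
    (w : V → V → ℝ → ℝ)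
    (hw_cont : ∀ i j, Continuous (w i j))
    (hw_per : ∀ i j, Function.Periodic (w i j) τ)
    (hw_pos : ∀ i j, (i, j) ∈ E → ∀ t, 0 < w i j t)
    (hw_zero : ∀ i j, (i, j) ∉ E → ∀ t, w i j t = 0)
    (pi : V → ℝ → ℝ)
    (hpi_diff : ∀ i, ContDiff ℝ 1 (pi i))
    (hpi_per : ∀ i, Function.Periodic (pi i) τ)
    (hpi_pos : ∀ i t, 0 < pi i t)
    (hpi_sum : ∀ t : ℝ, ∑ i, pi i t = 1)
    (hpi_cont_eq : ∀ i t, deriv (pi i) t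
      + (∑ j, pi i t * w i j t) - (∑ j, pi j t * w j i t) = 0)
    (hJ_ne : ∀ i j, (i, j) ∈ E → ∀ t : ℝ,
      pi i t * w i j t - pi j t * w j i t ≠ 0)
    (α : V → V → ℝ → ℝ)
    (hα_cont : ∀ i j, Continuous (α i j))
    (hα_per : ∀ i j, Function.Periodic (α i j) τ)
    (hα_anti : ∀ i j (t : ℝ), α i j t = - α j i t)
    (γ : V → ℝ → ℝ)
    (hγ_cont : ∀ i, Continuous (γ i))
    (hγ_per : ∀ i, Function.Periodic (γ i) τ)
    (y0 : ℝ)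
    (hy0 : y0 = (1 / τ) * (∫ t in (0:ℝ)..τ,
      ((∑ i, ∑ j, α i j t * (pi i t * w i j t)) + ∑ i, γ i t * pi i t)))
    (hy0_ne : y0 ≠ 0)
    (Iag : ℝ → ℝ≥0∞)
    (hI : ∀ y : ℝ, Iag y = sInf { c : ℝ≥0∞ |
      ∃ (Q : V → V → ℝ → ℝ) (ρ : V → ℝ → ℝ),
        (∀ i j, Continuous (Q i j)) ∧
        (∀ i j, Function.Periodic (Q i j) τ) ∧
        (∀ i j t, 0 ≤ Q i j t) ∧
        (∀ i j, (i, j) ∉ E → ∀ t, Q i j t = 0) ∧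
        (∀ i, ContDiff ℝ 1 (ρ i)) ∧
        (∀ i, Function.Periodic (ρ i) τ) ∧
        (∀ i t, 0 ≤ ρ i t) ∧
        (∀ t : ℝ, ∑ i, ρ i t = 1) ∧
        (∀ i t, deriv (ρ i) t + (∑ j, Q i j t) - (∑ j, Q j i t) = 0) ∧
        ((1 / τ) * (∫ t in (0:ℝ)..τ,
          ((∑ i, ∑ j, α i j t * Q i j t) + ∑ i, γ i t * ρ i t)) = y) ∧
        c = ∑ e ∈ E, ENNReal.ofReal (1 / τ) *
          (∫⁻ t in Set.Ioc (0:ℝ) τ, Phi (Q e.1 e.2 t) (ρ e.1 t * w e.1 e.2 t)) })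
    -- the legal input (Z, m)
    (Z : V → V → ℝ → ℝ)
    (hZ_cont : ∀ i j, Continuous (Z i j))
    (hZ_per : ∀ i j, Function.Periodic (Z i j) τ)
    (hZ_anti : ∀ i j (t : ℝ), Z i j t = - Z j i t)
    (hZ_zero : ∀ i j, (i, j) ∉ E → ∀ t, Z i j t = 0)
    (m : V → ℝ → ℝ)
    (hm_diff : ∀ i, ContDiff ℝ 1 (m i))
    (hm_per : ∀ i, Function.Periodic (m i) τ)
    (hm_sum : ∀ t : ℝ, ∑ i, m i t = 0)
    (hm_cont_eq : ∀ i (t : ℝ), deriv (m i) t + (∑ j, Z i j t) = 0)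
    (h_norm : (1 / τ) * (∫ t in (0:ℝ)..τ,
      ((1 / 2) * (∑ i, ∑ j, α i j t * Z i j t) + ∑ i, γ i t * m i t)) = y0) :
    Filter.limsup (fun y : ℝ => Iag y / ENNReal.ofReal ((y - y0) ^ 2)) (𝓝[≠] y0)
      ≤ ENNReal.ofReal ((1 / (8 * y0 ^ 2)) *
          ∑ e ∈ E, (1 / τ) * (∫ t in (0:ℝ)..τ,
            ((Z e.1 e.2 t - (m e.1 t * w e.1 e.2 t - m e.2 t * w e.2 e.1 t)) ^ 2
                / (pi e.1 t * w e.1 e.2 t - pi e.2 t * w e.2 e.1 t)) *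
              Real.log ((pi e.1 t * w e.1 e.2 t) / (pi e.2 t * w e.2 e.1 t)))) :=
  stmt6_general E hE_symm τ hτ w hw_cont hw_per hw_pos hw_zero pi hpi_diff hpi_per hpi_pos hpi_sum
    hpi_cont_eq hJ_ne α hα_cont hα_anti γ hγ_cont y0 hy0 hy0_ne Iag hI Z hZ_cont hZ_per hZ_anti
    hZ_zero m hm_diff hm_per hm_sum hm_cont_eq h_norm
end

section
/- Proposition (comparison of the universal constants C(p), C_a(p), C*_a(p)). Let p = (p_i)_{i∈V} be a probability vector on V (p_i ≥ 0, Σ_{i∈V} p_i = 1). Define C(p) := 2 Σ_{(i,j)∈E} p_i² · (1/τ)∫₀^τ w_{ij}(t)²/𝒬_{ij}(t) dt, C_a(p) := Σ_{(i,j)∈E} (1/τ)∫₀^τ (p_i w_{ij}(t) − p_j w_{ji}(t))² / (𝒬_{ij}(t) + 𝒬_{ji}(t)) dt, and, assuming 𝒥_{ij}(t) ≠ 0 for all (i,j) ∈ E and all t, C*_a(p) := (1/2) Σ_{(i,j)∈E} (1/τ)∫₀^τ [(p_i w_{ij}(t) − p_j w_{ji}(t))² / 𝒥_{ij}(t)]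 · log(𝒬_{ij}(t)/𝒬_{ji}(t)) dt. Then C(p) ≥ C_a(p), and (under the assumption 𝒥_{ij}(t) ≠ 0 for all (i,j) ∈ E and all t) C*_a(p) ≥ C_a(p). -/
/-!
Both inequalities hold pointwise, edge by edge and time by time. Write `a = p_i w_ij`,
`b = p_j w_ji`, `c = 𝒬_ij`, `d = 𝒬_ji`. The first is the two-term Engel form of Cauchy–Schwarz,
`(a - b)² / (c + d) ≤ a² / c + b² / d`; summed over the symmetric edge set, the `b`-terms are the
`a`-terms of the reversed edges, which produces the factor `2` in `C(p)`. The second is the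
logarithmic-mean inequality `(c - d) / log (c / d) ≤ (c + d) / 2`, read off from the series
`log ((1 + u) / (1 - u)) = 2 ∑ u^(2k+1) / (2k+1)` at `u = (c - d) / (c + d)`.
-/

open Real

lemma two_mul_sq_le_mul_log_sub_log {u : ℝ} (hu : |u| < 1) :
    2 * u ^ 2 ≤ u * (log (1 + u) - log (1 - u)) := by
  have hsum := (hasSum_log_sub_log_of_abs_lt_one hu).mul_left u
  have hterm (k : ℕ) : u * (2 * (1 / (2 * k + 1)) * u ^ (2 * k + 1)) =
      2 / (2 * k + 1) * (u ^ 2) ^ (k + 1) := by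
    ring
  calc 2 * u ^ 2 = u * (2 * (1 / (2 * (0 : ℕ) + 1)) * u ^ (2 * 0 + 1)) := by norm_num; ring
    _ ≤ _ := le_hasSum hsum 0 fun k _ => by rw [hterm]; positivity

lemma two_mul_sq_div_add_le_mul_log_div {x y : ℝ} (hx : 0 < x) (hy : 0 < y) :
    2 * (x - y) ^ 2 / (x + y) ≤ (x - y) * log (x / y) := by
  have hxy : 0 < x + y := by positivity
  have hu : |(x - y) / (x + y)| < 1 := by
    rw [abs_div, abs_of_pos hxy, div_lt_one hxy, abs_lt]; constructor <;> linarith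
  obtain ⟨hu₁, hu₂⟩ := abs_lt.mp hu
  have hratio : (1 + (x - y) / (x + y)) / (1 - (x - y) / (x + y)) = x / y := by
    field_simp [hy.ne']; ring
  have key := two_mul_sq_le_mul_log_sub_log hu
  rw [← log_div (by linarith) (by linarith), hratio] at key
  calc 2 * (x - y) ^ 2 / (x + y) = (x + y) * (2 * ((x - y) / (x + y)) ^ 2) := by field_simp
    _ ≤ (x + y) * ((x - y) / (x + y) * log (x / y)) := by gcongr
    _ = (x - y) * log (x / y) := by field_simp

lemma sq_sub_div_add_le_half_mul_log_div (a b : ℝ) {c d : ℝ} (hc : 0 < c) (hd : 0 < d)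
    (hcd : c - d ≠ 0) :
    (a - b) ^ 2 / (c + d) ≤ 1 / 2 * ((a - b) ^ 2 / (c - d) * log (c / d)) := by
  calc (a - b) ^ 2 / (c + d) = (a - b) ^ 2 / (c - d) ^ 2 * (2 * (c - d) ^ 2 / (c + d)) / 2 := by
        field_simp
    _ ≤ (a - b) ^ 2 / (c - d) ^ 2 * ((c - d) * log (c / d)) / 2 := by
        gcongr; exact two_mul_sq_div_add_le_mul_log_div hc hd
    _ = 1 / 2 * ((a - b) ^ 2 / (c - d) * log (c / d)) := by field_simp

lemma sq_sub_div_add_le (a b : ℝ) {c d : ℝ} (hc : 0 < c) (hd : 0 < d) :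
    (a - b) ^ 2 / (c + d) ≤ a ^ 2 / c + b ^ 2 / d := by
  simpa [Fin.sum_univ_two, sub_eq_add_neg] using
    Finset.sq_sum_div_le_sum_sq_div Finset.univ ![a, -b] (g := ![c, d])
      (by simp [Fin.forall_fin_two, hc, hd])

lemma Finset.sum_comp_swap {α M : Type*} [AddCommMonoid M] {E : Finset (α × α)}
    (hE : ∀ e ∈ E, e.swap ∈ E) (f : α × α → M) : ∑ e ∈ E, f e.swap = ∑ e ∈ E, f e :=
  Finset.sum_nbij' Prod.swap Prod.swap hE hE (by simp) (by simp) (by simp)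

section IntervalIntegral

variable {α β : ℝ} {a b c d : ℝ → ℝ}

lemma integral_sq_sub_div_add_le (hαβ : α ≤ β) (ha : Continuous a) (hb : Continuous b)
    (hc : Continuous c) (hd : Continuous d) (hc₀ : ∀ t, 0 < c t) (hd₀ : ∀ t, 0 < d t) :
    ∫ t in α..β, (a t - b t) ^ 2 / (c t + d t) ≤
      (∫ t in α..β, a t ^ 2 / c t) + ∫ t in α..β, b t ^ 2 / d t := by
  have hcd (t : ℝ) : c t + d t ≠ 0 := (add_pos (hc₀ t) (hd₀ t)).ne'
  have hac : IntervalIntegrable (fun t => a t ^ 2 / c t) MeasureTheory.volume α β :=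
    ((ha.pow 2).div hc fun t => (hc₀ t).ne').intervalIntegrable α β
  have hbd : IntervalIntegrable (fun t => b t ^ 2 / d t) MeasureTheory.volume α β :=
    ((hb.pow 2).div hd fun t => (hd₀ t).ne').intervalIntegrable α β
  rw [← intervalIntegral.integral_add hac hbd]
  exact intervalIntegral.integral_mono hαβ
    ((((ha.sub hb).pow 2).div (hc.add hd) hcd).intervalIntegrable α β) (hac.add hbd)
    fun t => sq_sub_div_add_le (a t) (b t) (hc₀ t) (hd₀ t)

lemma integral_sq_sub_div_add_le_half_mul_log (hαβ : α ≤ β) (ha : Continuous a)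
    (hb : Continuous b) (hc : Continuous c) (hd : Continuous d) (hc₀ : ∀ t, 0 < c t)
    (hd₀ : ∀ t, 0 < d t) (hcd : ∀ t, c t - d t ≠ 0) :
    ∫ t in α..β, (a t - b t) ^ 2 / (c t + d t) ≤
      1 / 2 * ∫ t in α..β, (a t - b t) ^ 2 / (c t - d t) * log (c t / d t) := by
  have hcd' (t : ℝ) : c t + d t ≠ 0 := (add_pos (hc₀ t) (hd₀ t)).ne'
  have hlog : Continuous fun t => log (c t / d t) :=
    (hc.div hd fun t => (hd₀ t).ne').log fun t => (div_pos (hc₀ t) (hd₀ t)).ne'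
  rw [← intervalIntegral.integral_const_mul]
  exact intervalIntegral.integral_mono hαβ
    ((((ha.sub hb).pow 2).div (hc.add hd) hcd').intervalIntegrable α β)
    (((((ha.sub hb).pow 2).div (hc.sub hd) hcd).mul hlog).const_mul _ |>.intervalIntegrable α β)
    fun t => sq_sub_div_add_le_half_mul_log_div (a t) (b t) (hc₀ t) (hd₀ t) (hcd t)

end IntervalIntegral

theorem stmt11_general
    {V : Type}
    (E : Finset (V × V))
    (hE_symm : ∀ i j : V, (i, j) ∈ E ↔ (j, i) ∈ E)
    (τ : ℝ) (hτ : 0 < τ)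
    (w : V → V → ℝ → ℝ)
    (hw_cont : ∀ i j, Continuous (w i j))
    (hw_pos : ∀ i j, (i, j) ∈ E → ∀ t, 0 < w i j t)
    (pi : V → ℝ → ℝ)
    (hpi_cont : ∀ i, Continuous (pi i))
    (hpi_pos : ∀ i t, 0 < pi i t)
    (p : V → ℝ)
    (Cp Cap Castar : ℝ)
    (hCp : Cp = 2 * ∑ e ∈ E, (p e.1) ^ 2 * ((1 / τ) * (∫ t in (0:ℝ)..τ,
      (w e.1 e.2 t) ^ 2 / (pi e.1 t * w e.1 e.2 t))))
    (hCap : Cap = ∑ e ∈ E, (1 / τ) * (∫ t in (0:ℝ)..τ,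
      (p e.1 * w e.1 e.2 t - p e.2 * w e.2 e.1 t) ^ 2
        / (pi e.1 t * w e.1 e.2 t + pi e.2 t * w e.2 e.1 t)))
    (hCastar : Castar = (1 / 2) * ∑ e ∈ E, (1 / τ) * (∫ t in (0:ℝ)..τ,
      ((p e.1 * w e.1 e.2 t - p e.2 * w e.2 e.1 t) ^ 2
          / (pi e.1 t * w e.1 e.2 t - pi e.2 t * w e.2 e.1 t)) *
        Real.log ((pi e.1 t * w e.1 e.2 t) / (pi e.2 t * w e.2 e.1 t)))) :
    Cap ≤ Cp ∧
    ((∀ i j, (i, j) ∈ E → ∀ t : ℝ,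
        pi i t * w i j t - pi j t * w j i t ≠ 0) → Cap ≤ Castar) := by
  have hswap (e) (he : e ∈ E) : e.swap ∈ E := (hE_symm e.1 e.2).mp he
  have hQ (e) (he : e ∈ E) (t : ℝ) : 0 < pi e.1 t * w e.1 e.2 t :=
    mul_pos (hpi_pos _ t) (hw_pos _ _ he t)
  have hcont (i j : V) : Continuous fun t => pi i t * w i j t := (hpi_cont i).mul (hw_cont i j)
  have hpw (i j : V) : Continuous fun t => p i * w i j t := continuous_const.mul (hw_cont i j)
  constructor
  · set G : V × V → ℝ := fun e =>
      1 / τ * ∫ t in (0:ℝ)..τ, (p e.1 * w e.1 e.2 t) ^ 2 / (pi e.1 t * w e.1 e.2 t) with hG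
    have hCpG : Cp = ∑ e ∈ E, (G e + G e.swap) := by
      rw [Finset.sum_add_distrib, Finset.sum_comp_swap hswap G, ← two_mul, hCp]
      congr 1
      refine Finset.sum_congr rfl fun e _ => ?_
      simp only [hG, mul_pow, mul_div_assoc, intervalIntegral.integral_const_mul]
      ring
    rw [hCap, hCpG]
    refine Finset.sum_le_sum fun e he => ?_
    rw [← mul_add]
    exact mul_le_mul_of_nonneg_left (integral_sq_sub_div_add_le hτ.le (hpw _ _) (hpw _ _)
      (hcont _ _) (hcont _ _) (hQ e he) (hQ e.swap (hswap e he))) (by positivity)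
  · intro hJ
    rw [hCap, hCastar, Finset.mul_sum]
    refine Finset.sum_le_sum fun e he => ?_
    rw [mul_left_comm]
    exact mul_le_mul_of_nonneg_left (integral_sq_sub_div_add_le_half_mul_log hτ.le (hpw _ _)
      (hpw _ _) (hcont _ _) (hcont _ _) (hQ e he) (hQ e.swap (hswap e he))
      (hJ e.1 e.2 he)) (by positivity)

theorem stmt11
    {V : Type} [Fintype V] [Nonempty V]
    (E : Finset (V × V)) (hE : ∀ i : V, (i, i) ∉ E)
    (hE_symm : ∀ i j : V, (i, j) ∈ E ↔ (j, i) ∈ E)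
    (τ : ℝ) (hτ : 0 < τ)
    (w : V → V → ℝ → ℝ)
    (hw_cont : ∀ i j, Continuous (w i j))
    (hw_per : ∀ i j, Function.Periodic (w i j) τ)
    (hw_pos : ∀ i j, (i, j) ∈ E → ∀ t, 0 < w i j t)
    (hw_zero : ∀ i j, (i, j) ∉ E → ∀ t, w i j t = 0)
    (pi : V → ℝ → ℝ)
    (hpi_cont : ∀ i, Continuous (pi i))
    (hpi_per : ∀ i, Function.Periodic (pi i) τ)
    (hpi_pos : ∀ i t, 0 < pi i t)
    (hpi_sum : ∀ t : ℝ, ∑ i, pi i t = 1)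
    (p : V → ℝ) (hp_nonneg : ∀ i, 0 ≤ p i) (hp_sum : ∑ i, p i = 1)
    (Cp Cap Castar : ℝ)
    (hCp : Cp = 2 * ∑ e ∈ E, (p e.1) ^ 2 * ((1 / τ) * (∫ t in (0:ℝ)..τ,
      (w e.1 e.2 t) ^ 2 / (pi e.1 t * w e.1 e.2 t))))
    (hCap : Cap = ∑ e ∈ E, (1 / τ) * (∫ t in (0:ℝ)..τ,
      (p e.1 * w e.1 e.2 t - p e.2 * w e.2 e.1 t) ^ 2
        / (pi e.1 t * w e.1 e.2 t + pi e.2 t * w e.2 e.1 t)))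
    (hCastar : Castar = (1 / 2) * ∑ e ∈ E, (1 / τ) * (∫ t in (0:ℝ)..τ,
      ((p e.1 * w e.1 e.2 t - p e.2 * w e.2 e.1 t) ^ 2
          / (pi e.1 t * w e.1 e.2 t - pi e.2 t * w e.2 e.1 t)) *
        Real.log ((pi e.1 t * w e.1 e.2 t) / (pi e.2 t * w e.2 e.1 t)))) :
    Cap ≤ Cp ∧
    ((∀ i j, (i, j) ∈ E → ∀ t : ℝ,
        pi i t * w i j t - pi j t * w j i t ≠ 0) → Cap ≤ Castar) :=
  stmt11_general E hE_symm τ hτ w hw_cont hw_pos pi hpi_cont hpi_pos p Cp Cap Castar hCp hCap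
    hCastar
end

section
/- Inequality for time-independent stationary distributions (Remark on comparing GTUR 1 with the optimal GTUR 2). Let V be a finite nonempty set and E ⊆ V × V a set of oriented edges with (i,i) ∉ E for all i; assume every i ∈ V has at least one outgoing edge, i.e. for every i there exists j with (i,j) ∈ E. Fix a period τ > 0. For each (i,j) ∈ V × V let w_{ij} : ℝ → ℝ be a continuous τ-periodic function with w_{ij}(t) > 0 for all t if (i,j) ∈ E and w_{ij}(t) = 0 for all t if (i,j) ∉ E. Let (π_i)_{i∈V} be a time-independent probability vector with π_i > 0 for all i, and set 𝒬_{ij}(t) := π_i w_{ij}(t). Writing f̄ := (1/τ)∫₀^τ f(t) dt, it holds: Σ_{i∈V} π_i · (Σ_{j:(i,j)∈E} w̄_{ij})^{-1} ≥ ( Σ_{(i,j)∈E} (𝒬̄_{ij})² · (1/τ)∫₀^τ 1/𝒬_{ij}(t) dt )^{-1}. -/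
/-!
By Cauchy–Schwarz, `1 ≤ 𝒬̄ · (1/𝒬)‾` on every edge, so the inverted sum on the left dominates
`∑_{(i,j) ∈ E} 𝒬̄_{ij} = ∑_i π_i S_i`, where `S_i = ∑_j w̄_{ij}` is the mean escape rate
(this is where `π` being time-independent enters). Jensen's inequality for `x ↦ x⁻¹` with the
weights `π_i` then gives `(∑_i π_i S_i)⁻¹ ≤ ∑_i π_i S_i⁻¹`.
-/

open Set MeasureTheory

theorem sq_sub_le_integral_mul_integral_inv {f : ℝ → ℝ} {a b : ℝ} (hab : a ≤ b)
    (hf : IntervalIntegrable f volume a b)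
    (hf_inv : IntervalIntegrable (fun t => (f t)⁻¹) volume a b)
    (hpos : ∀ t ∈ Ioo a b, 0 < f t) :
    (b - a) ^ 2 ≤ (∫ t in a..b, f t) * ∫ t in a..b, (f t)⁻¹ := by
  rcases hab.eq_or_lt with rfl | hlt
  · simp
  set A := ∫ t in a..b, f t
  have hA : 0 < A := intervalIntegral.intervalIntegral_pos_of_pos_on hf hpos hlt
  -- `(c f - 1)² ≥ 0` gives `2c - c² f ≤ 1 / f`; integrate and optimise at `c = (b - a) / A`.
  have key : ∀ c : ℝ, 2 * c * (b - a) - c ^ 2 * A ≤ ∫ t in a..b, (f t)⁻¹ := by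
    intro c
    have hpt : ∀ t ∈ Ioo a b, 2 * c - c ^ 2 * f t ≤ (f t)⁻¹ := by
      intro t ht
      have hft := hpos t ht
      have : (f t)⁻¹ - (2 * c - c ^ 2 * f t) = (c * f t - 1) ^ 2 / f t := by
        field_simp
        ring
      linarith [show 0 ≤ (c * f t - 1) ^ 2 / f t by positivity]
    calc 2 * c * (b - a) - c ^ 2 * A = ∫ t in a..b, (2 * c - c ^ 2 * f t) := by
          rw [intervalIntegral.integral_sub intervalIntegrable_const (hf.const_mul _),
            intervalIntegral.integral_const, intervalIntegral.integral_const_mul, smul_eq_mul]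
          ring
      _ ≤ ∫ t in a..b, (f t)⁻¹ :=
          intervalIntegral.integral_mono_on_of_le_Ioo hab
            (intervalIntegrable_const.sub (hf.const_mul _)) hf_inv hpt
  have := key ((b - a) / A)
  field_simp at this ⊢
  nlinarith

theorem average_le_sq_average_mul_average_inv {f : ℝ → ℝ} {τ : ℝ} (hτ : 0 < τ)
    (hf : IntervalIntegrable f volume 0 τ)
    (hf_inv : IntervalIntegrable (fun t => 1 / f t) volume 0 τ)
    (hpos : ∀ t ∈ Ioo 0 τ, 0 < f t) :
    (1 / τ) * ∫ t in (0:ℝ)..τ, f t ≤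
      ((1 / τ) * ∫ t in (0:ℝ)..τ, f t) ^ 2 * ((1 / τ) * ∫ t in (0:ℝ)..τ, 1 / f t) := by
  simp only [one_div] at hf_inv ⊢
  have hCS := sq_sub_le_integral_mul_integral_inv hτ.le hf hf_inv hpos
  have hA : 0 < ∫ t in (0:ℝ)..τ, f t :=
    intervalIntegral.intervalIntegral_pos_of_pos_on hf hpos hτ
  rw [sub_zero] at hCS
  set A := ∫ t in (0:ℝ)..τ, f t
  calc τ⁻¹ * A = τ⁻¹ * A * (τ ^ 2 / τ ^ 2) := by field_simp
    _ ≤ τ⁻¹ * A * (A * (∫ t in (0:ℝ)..τ, (f t)⁻¹) / τ ^ 2) := by gcongr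
    _ = _ := by ring

theorem Finset.sum_eq_sum_sum_filter_mem {α β M : Type*} [Fintype α] [Fintype β] [DecidableEq α]
    [DecidableEq β] [AddCommMonoid M] (E : Finset (α × β)) (g : α → β → M) :
    ∑ e ∈ E, g e.1 e.2 = ∑ i, ∑ j ∈ univ.filter (fun j => (i, j) ∈ E), g i j := by
  simp only [Finset.sum_filter]
  rw [← Fintype.sum_prod_type' (fun i j => if (i, j) ∈ E then g i j else 0), ← Finset.sum_filter]
  congr 1
  ext; simp

theorem inv_sum_le_sum_inv {ι : Type*} (s : Finset ι) {p x : ι → ℝ} (hp : ∀ i ∈ s, 0 ≤ p i)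
    (hp_sum : ∑ i ∈ s, p i = 1) (hx : ∀ i ∈ s, 0 < x i) :
    (∑ i ∈ s, p i * x i)⁻¹ ≤ ∑ i ∈ s, p i * (x i)⁻¹ := by
  simpa [zpow_neg_one] using (convexOn_zpow (𝕜 := ℝ) (-1)).map_sum_le hp hp_sum hx

theorem stmt13_general
    {V : Type} [Fintype V] [DecidableEq V]
    (E : Finset (V × V))
    (hE_out : ∀ i : V, ∃ j : V, (i, j) ∈ E)
    (τ : ℝ) (hτ : 0 < τ)
    (w : V → V → ℝ → ℝ)
    (hw_cont : ∀ i j, Continuous (w i j))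
    (hw_pos : ∀ i j, (i, j) ∈ E → ∀ t, 0 < w i j t)
    (pi : V → ℝ) (hpi_pos : ∀ i, 0 < pi i) (hpi_sum : ∑ i, pi i = 1) :
    (∑ e ∈ E, ((1 / τ) * (∫ t in (0:ℝ)..τ, pi e.1 * w e.1 e.2 t)) ^ 2 *
        ((1 / τ) * (∫ t in (0:ℝ)..τ, 1 / (pi e.1 * w e.1 e.2 t))))⁻¹
      ≤ ∑ i, pi i *
          (∑ j ∈ Finset.univ.filter (fun j => (i, j) ∈ E),
            (1 / τ) * (∫ t in (0:ℝ)..τ, w i j t))⁻¹ := by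
  set S : V → ℝ := fun i => ∑ j ∈ Finset.univ.filter (fun j => (i, j) ∈ E),
      (1 / τ) * (∫ t in (0:ℝ)..τ, w i j t)
  have hS_pos : ∀ i, 0 < S i := by
    intro i
    obtain ⟨j, hj⟩ := hE_out i
    have hw_avg_pos : ∀ k, (i, k) ∈ E → 0 < (1 / τ) * ∫ t in (0:ℝ)..τ, w i k t := fun k hk =>
      mul_pos (one_div_pos.2 hτ) (intervalIntegral.intervalIntegral_pos_of_pos
        ((hw_cont i k).intervalIntegrable _ _) (hw_pos i k hk) hτ)
    exact Finset.sum_pos' (fun k hk => (hw_avg_pos k (Finset.mem_filter.1 hk).2).le)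
      ⟨j, Finset.mem_filter.2 ⟨Finset.mem_univ j, hj⟩, hw_avg_pos j hj⟩
  have hflux :
      ∑ e ∈ E, (1 / τ) * ∫ t in (0:ℝ)..τ, pi e.1 * w e.1 e.2 t = ∑ i, pi i * S i := by
    simp only [intervalIntegral.integral_const_mul]
    rw [Finset.sum_eq_sum_sum_filter_mem E fun i j => 1 / τ * (pi i * ∫ t in (0:ℝ)..τ, w i j t)]
    simp only [S, Finset.mul_sum]
    refine Finset.sum_congr rfl fun i _ => Finset.sum_congr rfl fun j _ => by ring
  have hedge : ∀ e ∈ E, (1 / τ) * ∫ t in (0:ℝ)..τ, pi e.1 * w e.1 e.2 t ≤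
      ((1 / τ) * (∫ t in (0:ℝ)..τ, pi e.1 * w e.1 e.2 t)) ^ 2 *
        ((1 / τ) * (∫ t in (0:ℝ)..τ, 1 / (pi e.1 * w e.1 e.2 t))) := by
    intro e he
    have hQ_cont : Continuous fun t => pi e.1 * w e.1 e.2 t := by fun_prop
    have hQ_pos : ∀ t, 0 < pi e.1 * w e.1 e.2 t := fun t => mul_pos (hpi_pos _) (hw_pos _ _ he t)
    exact average_le_sq_average_mul_average_inv hτ (hQ_cont.intervalIntegrable _ _)
      ((continuous_const.div hQ_cont fun t => (hQ_pos t).ne').intervalIntegrable _ _)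
      fun t _ => hQ_pos t
  have hV : (Finset.univ : Finset V).Nonempty :=
    Finset.nonempty_of_sum_ne_zero (hpi_sum ▸ one_ne_zero)
  have hT_pos : 0 < ∑ i, pi i * S i :=
    Finset.sum_pos (fun i _ => mul_pos (hpi_pos i) (hS_pos i)) hV
  calc _ ≤ (∑ i, pi i * S i)⁻¹ := inv_anti₀ hT_pos (hflux ▸ Finset.sum_le_sum hedge)
    _ ≤ ∑ i, pi i * (S i)⁻¹ :=
      inv_sum_le_sum_inv _ (fun i _ => (hpi_pos i).le) hpi_sum fun i _ => hS_pos i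

theorem stmt13
    {V : Type} [Fintype V] [Nonempty V] [DecidableEq V]
    (E : Finset (V × V)) (hE : ∀ i : V, (i, i) ∉ E)
    (hE_out : ∀ i : V, ∃ j : V, (i, j) ∈ E)
    (τ : ℝ) (hτ : 0 < τ)
    (w : V → V → ℝ → ℝ)
    (hw_cont : ∀ i j, Continuous (w i j))
    (hw_per : ∀ i j, Function.Periodic (w i j) τ)
    (hw_pos : ∀ i j, (i, j) ∈ E → ∀ t, 0 < w i j t)
    (hw_zero : ∀ i j, (i, j) ∉ E → ∀ t, w i j t = 0)
    (pi : V → ℝ) (hpi_pos : ∀ i, 0 < pi i) (hpi_sum : ∑ i, pi i = 1) :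
    (∑ e ∈ E, ((1 / τ) * (∫ t in (0:ℝ)..τ, pi e.1 * w e.1 e.2 t)) ^ 2 *
        ((1 / τ) * (∫ t in (0:ℝ)..τ, 1 / (pi e.1 * w e.1 e.2 t))))⁻¹
      ≤ ∑ i, pi i *
          (∑ j ∈ Finset.univ.filter (fun j => (i, j) ∈ E),
            (1 / τ) * (∫ t in (0:ℝ)..τ, w i j t))⁻¹ :=
  stmt13_general E hE_out τ hτ w hw_cont hw_pos pi hpi_pos hpi_sum
end

section
/- Second-order Taylor expansion of the current large-deviation cost Ψ. Define Ψ(j,g,a) := √(g² + a²) − √(j² + a²) + j·(arcsinh(j/a) − arcsinh(g/a)) for real j, g and a > 0. Fix x > 0 and y > 0. Then, as (δj, δg, δa) → (0,0,0) in ℝ³, Ψ(x − y + δj, x − y + δg, 2√(x·y) + δa) − (δj − δg)²/(2(x + y)) = o(δj² + δg² + δa²). -/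
open scoped Topology
open Asymptotics

/-- The integrand `Ψ(j,g,a) = √(g²+a²) − √(j²+a²) + j(arcsinh(j/a) − arcsinh(g/a))`
of the joint large-deviation rate functional for the empirical current and density. -/
noncomputable def Psi (j g a : ℝ) : ℝ :=
  Real.sqrt (g ^ 2 + a ^ 2) - Real.sqrt (j ^ 2 + a ^ 2)
    + j * (Real.arsinh (j / a) - Real.arsinh (g / a))

/-!
Since `∂Ψ/∂g = (g - j) / √(g² + a²)` and `Ψ` vanishes at `g = j`, we have
`Ψ(j, g, a) = ∫_j^g (t - j) / √(t² + a²) dt`. Freezing the weight at its value `1 / (x + y)` at the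
base point (where `√((x - y)² + 4xy) = x + y`) gives exactly `(g - j)² / (2(x + y))`, and the error
is at most `(g - j)²` times the oscillation of the weight near the base point, which tends to zero
by continuity.
-/

open Real Set intervalIntegral

lemma hasDerivAt_sqrt_sq_add_sq {a : ℝ} (ha : a ≠ 0) (t : ℝ) :
    HasDerivAt (fun g => √(g ^ 2 + a ^ 2)) (t / √(t ^ 2 + a ^ 2)) t := by
  have hpos : t ^ 2 + a ^ 2 ≠ 0 := by positivity
  convert ((hasDerivAt_pow 2 t).add_const (a ^ 2)).sqrt hpos using 1
  field_simp
  ring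

lemma hasDerivAt_arsinh_div {a : ℝ} (ha : 0 < a) (t : ℝ) :
    HasDerivAt (fun g => arsinh (g / a)) (√(t ^ 2 + a ^ 2))⁻¹ t := by
  have hsqrt : √(1 + (t / a) ^ 2) = √(t ^ 2 + a ^ 2) / a := by
    rw [show 1 + (t / a) ^ 2 = (t ^ 2 + a ^ 2) / a ^ 2 by field_simp; ring,
      sqrt_div' _ (sq_nonneg a), sqrt_sq ha.le]
  refine ((hasDerivAt_arsinh (t / a)).comp t ((hasDerivAt_id t).div_const a)).congr_deriv ?_
  rw [hsqrt]
  field_simp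

lemma hasDerivAt_Psi_snd (j : ℝ) {a : ℝ} (ha : 0 < a) (t : ℝ) :
    HasDerivAt (fun g => Psi j g a) ((t - j) / √(t ^ 2 + a ^ 2)) t := by
  refine (((hasDerivAt_sqrt_sq_add_sq ha.ne' t).sub_const (√(j ^ 2 + a ^ 2))).add
    (((hasDerivAt_arsinh_div ha t).const_sub (arsinh (j / a))).const_mul j)).congr_deriv ?_
  ring

lemma Psi_eq_integral (j g : ℝ) {a : ℝ} (ha : 0 < a) :
    Psi j g a = ∫ t in j..g, (t - j) / √(t ^ 2 + a ^ 2) := by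
  have hcont : Continuous fun t : ℝ => (t - j) / √(t ^ 2 + a ^ 2) :=
    by fun_prop (disch := intro t; positivity)
  rw [integral_eq_sub_of_hasDerivAt (fun t _ => hasDerivAt_Psi_snd j ha t)
    (hcont.intervalIntegrable j g)]
  simp [Psi]

lemma integral_sub_left (j g : ℝ) : ∫ t in j..g, (t - j) = (g - j) ^ 2 / 2 := by
  rw [integral_sub intervalIntegrable_id intervalIntegrable_const, integral_id, integral_const,
    smul_eq_mul]
  ring

lemma Psi_sub_quadratic_eq_integral (j g : ℝ) {a s : ℝ} (ha : 0 < a) (hs : s ≠ 0) :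
    Psi j g a - (g - j) ^ 2 / (2 * s)
      = ∫ t in j..g, (t - j) * ((√(t ^ 2 + a ^ 2))⁻¹ - s⁻¹) := by
  have hcont : Continuous fun t : ℝ => (t - j) / √(t ^ 2 + a ^ 2) :=
    by fun_prop (disch := intro t; positivity)
  have hquad : (g - j) ^ 2 / (2 * s) = ∫ t in j..g, (t - j) / s := by
    rw [intervalIntegral.integral_div, integral_sub_left]
    field_simp
  rw [Psi_eq_integral j g ha, hquad, ← integral_sub (hcont.intervalIntegrable j g)
    ((by fun_prop : Continuous fun t : ℝ => (t - j) / s).intervalIntegrable j g)]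
  congr 1 with t
  ring

lemma abs_integral_sub_left_mul_le {f : ℝ → ℝ} {j g C : ℝ}
    (hf : ∀ t ∈ uIcc j g, |f t| ≤ C) :
    |∫ t in j..g, (t - j) * f t| ≤ C * (g - j) ^ 2 := by
  have hbound : ∀ t ∈ uIoc j g, ‖(t - j) * f t‖ ≤ |g - j| * C := fun t ht => by
    have ht := uIoc_subset_uIcc ht
    rw [norm_mul, norm_eq_abs, norm_eq_abs]
    exact mul_le_mul (abs_sub_left_of_mem_uIcc ht) (hf t ht) (abs_nonneg _) (abs_nonneg _)
  calc |∫ t in j..g, (t - j) * f t| ≤ |g - j| * C * |g - j| :=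
        norm_integral_le_of_norm_le_const hbound
    _ = C * (g - j) ^ 2 := by rw [← sq_abs (g - j)]; ring

lemma abs_Psi_sub_quadratic_le {j g a s C : ℝ} (ha : 0 < a) (hs : s ≠ 0)
    (hC : ∀ t ∈ uIcc j g, |(√(t ^ 2 + a ^ 2))⁻¹ - s⁻¹| ≤ C) :
    |Psi j g a - (g - j) ^ 2 / (2 * s)| ≤ C * (g - j) ^ 2 := by
  rw [Psi_sub_quadratic_eq_integral j g ha hs]
  exact abs_integral_sub_left_mul_le hC

lemma dist_lt_of_mem_uIcc_add {c u w r t : ℝ} (hu : |u| < r) (hw : |w| < r)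
    (ht : t ∈ uIcc (c + u) (c + w)) : dist t c < r := by
  have hmem : ∀ {u}, |u| < r → c + u ∈ Ioo (c - r) (c + r) := fun hu => by
    rw [← Real.ball_eq_Ioo, Metric.mem_ball, dist_eq, add_sub_cancel_left]
    exact hu
  rw [← Metric.mem_ball, Real.ball_eq_Ioo]
  exact ordConnected_Ioo.uIcc_subset (hmem hu) (hmem hw) ht

theorem Psi_sub_quadratic_isLittleO {c b : ℝ} (hb : 0 < b) :
    (fun v : ℝ × ℝ × ℝ =>
        Psi (c + v.1) (c + v.2.1) (b + v.2.2) - (v.1 - v.2.1) ^ 2 / (2 * √(c ^ 2 + b ^ 2)))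
      =o[𝓝 0] fun v : ℝ × ℝ × ℝ => v.1 ^ 2 + v.2.1 ^ 2 + v.2.2 ^ 2 := by
  have hs : √(c ^ 2 + b ^ 2) ≠ 0 := by positivity
  have hcont : ContinuousAt (fun p : ℝ × ℝ => (√(p.1 ^ 2 + p.2 ^ 2))⁻¹) (c, b) :=
    (by fun_prop : Continuous fun p : ℝ × ℝ => √(p.1 ^ 2 + p.2 ^ 2)).continuousAt.inv₀ hs
  refine isLittleO_iff.2 fun ε hε => ?_
  obtain ⟨δ, hδ, hF⟩ := Metric.continuousAt_iff.1 hcont (ε / 2) (half_pos hε)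
  filter_upwards [Metric.ball_mem_nhds 0 (lt_min hδ hb)] with v hv
  rw [mem_ball_zero_iff] at hv
  have h₁ : |v.1| < min δ b := (norm_fst_le v).trans_lt hv
  have h₂ : |v.2.1| < min δ b := ((norm_fst_le v.2).trans (norm_snd_le v)).trans_lt hv
  have h₃ : |v.2.2| < min δ b := ((norm_snd_le v.2).trans (norm_snd_le v)).trans_lt hv
  have ha : 0 < b + v.2.2 := by linarith [neg_abs_le v.2.2, min_le_right δ b]
  have hC : ∀ t ∈ uIcc (c + v.1) (c + v.2.1),
      |(√(t ^ 2 + (b + v.2.2) ^ 2))⁻¹ - (√(c ^ 2 + b ^ 2))⁻¹| ≤ ε / 2 := by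
    intro t ht
    have htc : dist t c < δ := dist_lt_of_mem_uIcc_add
      (h₁.trans_le (min_le_left δ b)) (h₂.trans_le (min_le_left δ b)) ht
    refine (hF (?_ : dist (t, b + v.2.2) (c, b) < δ)).le
    rw [Prod.dist_eq, dist_eq (b + v.2.2), add_sub_cancel_left]
    exact max_lt htc (h₃.trans_le (min_le_left δ b))
  have hsq : (v.1 - v.2.1) ^ 2 ≤ 2 * (v.1 ^ 2 + v.2.1 ^ 2 + v.2.2 ^ 2) := by
    nlinarith [sq_nonneg (v.1 + v.2.1), sq_nonneg v.2.2]
  have key := abs_Psi_sub_quadratic_le ha hs hC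
  rw [show c + v.2.1 - (c + v.1) = -(v.1 - v.2.1) by ring, neg_sq] at key
  rw [norm_eq_abs, norm_of_nonneg (by positivity)]
  calc _ ≤ ε / 2 * (v.1 - v.2.1) ^ 2 := key
    _ ≤ ε / 2 * (2 * (v.1 ^ 2 + v.2.1 ^ 2 + v.2.2 ^ 2)) := by gcongr
    _ = ε * (v.1 ^ 2 + v.2.1 ^ 2 + v.2.2 ^ 2) := by ring

theorem stmt16 (x y : ℝ) (hx : 0 < x) (hy : 0 < y) :
    (fun v : ℝ × ℝ × ℝ =>
        Psi (x - y + v.1) (x - y + v.2.1) (2 * Real.sqrt (x * y) + v.2.2)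
          - (v.1 - v.2.1) ^ 2 / (2 * (x + y)))
      =o[𝓝 (0 : ℝ × ℝ × ℝ)]
    (fun v : ℝ × ℝ × ℝ => v.1 ^ 2 + v.2.1 ^ 2 + v.2.2 ^ 2) := by
  have hs : √((x - y) ^ 2 + (2 * √(x * y)) ^ 2) = x + y := by
    rw [mul_pow, sq_sqrt (by positivity), show (x - y) ^ 2 + 2 ^ 2 * (x * y) = (x + y) ^ 2 by ring,
      sqrt_sq (by positivity)]
  simpa only [hs] using Psi_sub_quadratic_isLittleO (c := x - y) (by positivity : 0 < 2 * √(x * y))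
end

section
/- Entropy bound on the normalization constant (key inequality behind GTUR 7). Let (Ω, 𝔉, P) be a probability space and Z : Ω → ℝ a measurable function such that Z, e^{−Z} and Z·e^{−Z} are P-integrable, E[e^{−Z}] = 1 and E[Z·e^{−Z}] = −E[Z] (expectations with respect to P). Then E[(1 + e^{Z})^{-1}] ≥ (1 + e^{E[Z]})^{-1}; equivalently, 1/E[(1 + e^{Z})^{-1}] ≤ 1 + e^{E[Z]}. -/
/-!
Weight `P` by `q = (1 + e^{-Z}) / 2`, a probability density since `E[e^{-Z}] = 1`. Pointwise
`(1 + e^z)⁻¹ = q(z) · g(log cosh z)` with `g w = (1 + e^w)⁻¹`, and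
`log cosh z ≤ s(z) := z sinh z / (1 + cosh z) = z tanh (z / 2)`, where
`q · s = z (1 - e^{-z}) / 2` has `P`-mean `E[Z]` by the second hypothesis. As `g` is decreasing
and convex on `[0, ∞)` and `s ≥ 0`, Jensen's inequality for `g` under `q P` gives the bound; we
use the tangent line of `g` at `E[Z]` instead, so that only a pointwise inequality has to be
integrated against `P`.
-/

open MeasureTheory Real Set

lemma ConvexOn.add_deriv_mul_sub_le {S : Set ℝ} {f : ℝ → ℝ} {f' x y : ℝ}
    (hf : ConvexOn ℝ S f) (hx : x ∈ S) (hy : y ∈ S) (hd : HasDerivAt f f' x) :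
    f x + f' * (y - x) ≤ f y := by
  rcases lt_trichotomy x y with hxy | rfl | hyx
  · have := hf.le_slope_of_hasDerivAt hx hy hxy hd
    rw [slope_def_field, le_div_iff₀ (sub_pos.2 hxy)] at this
    linarith
  · simp
  · have := hf.slope_le_of_hasDerivAt hy hx hyx hd
    rw [slope_def_field, div_le_iff₀ (sub_pos.2 hyx)] at this
    linarith

lemma mul_sinh_nonneg (z : ℝ) : 0 ≤ z * sinh z := by
  rcases le_total 0 z with hz | hz
  · exact mul_nonneg hz (sinh_nonneg_iff.2 hz)
  · exact mul_nonneg_of_nonpos_of_nonpos hz (sinh_nonpos_iff.2 hz)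

lemma sinh_le_mul_cosh {z : ℝ} (hz : 0 ≤ z) : sinh z ≤ z * cosh z := by
  have hmono : Monotone fun z => z * cosh z - sinh z := by
    refine monotone_of_hasDerivAt_nonneg (fun z => ?_) mul_sinh_nonneg
    refine (((hasDerivAt_id z).mul (hasDerivAt_cosh z)).sub (hasDerivAt_sinh z)).congr_deriv ?_
    simp
  simpa using hmono hz

lemma hasDerivAt_mul_sinh_div_sub_log_cosh (z : ℝ) :
    HasDerivAt (fun z => z * sinh z / (1 + cosh z) - log (cosh z))
      ((z * cosh z - sinh z) / (cosh z * (1 + cosh z))) z := by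
  have hc := cosh_pos z
  have hc1 : 0 < 1 + cosh z := by positivity
  refine ((((hasDerivAt_id z).mul (hasDerivAt_sinh z)).div
    ((hasDerivAt_cosh z).const_add 1) hc1.ne').sub ((hasDerivAt_cosh z).log hc.ne')).congr_deriv ?_
  simp only [Pi.mul_apply, id]
  field_simp
  linear_combination (z * cosh z) * cosh_sq z

lemma log_cosh_le_mul_sinh_div_of_nonneg {z : ℝ} (hz : 0 ≤ z) :
    log (cosh z) ≤ z * sinh z / (1 + cosh z) := by
  have hmono : MonotoneOn (fun z => z * sinh z / (1 + cosh z) - log (cosh z)) (Ici 0) := by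
    refine monotoneOn_of_hasDerivWithinAt_nonneg (convex_Ici 0)
      (fun z _ => (hasDerivAt_mul_sinh_div_sub_log_cosh z).continuousAt.continuousWithinAt)
      (fun z _ => (hasDerivAt_mul_sinh_div_sub_log_cosh z).hasDerivWithinAt) fun z hz => ?_
    rw [interior_Ici] at hz
    have := sinh_le_mul_cosh (le_of_lt hz)
    have := cosh_pos z
    exact div_nonneg (by linarith) (by positivity)
  simpa using hmono self_mem_Ici hz hz

lemma log_cosh_le_mul_sinh_div (z : ℝ) : log (cosh z) ≤ z * sinh z / (1 + cosh z) := by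
  rcases le_total 0 z with hz | hz
  · exact log_cosh_le_mul_sinh_div_of_nonneg hz
  · simpa using log_cosh_le_mul_sinh_div_of_nonneg (neg_nonneg.2 hz)

lemma hasDerivAt_inv_one_add_exp (w : ℝ) :
    HasDerivAt (fun w => (1 + exp w)⁻¹) (-(2 * (1 + cosh w))⁻¹) w := by
  refine (((hasDerivAt_exp w).const_add 1).inv (by positivity)).congr_deriv ?_
  rw [cosh_eq]
  have := exp_pos w
  field_simp
  rw [exp_neg]
  field_simp
  ring

lemma convexOn_inv_one_add_exp : ConvexOn ℝ (Ici 0) fun w => (1 + exp w)⁻¹ := by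
  refine MonotoneOn.convexOn_of_deriv (convex_Ici 0)
    (fun w _ => (hasDerivAt_inv_one_add_exp w).continuousAt.continuousWithinAt)
    (fun w _ => (hasDerivAt_inv_one_add_exp w).differentiableAt.differentiableWithinAt) ?_
  rw [interior_Ici]
  intro a ha b hb hab
  simp only [(hasDerivAt_inv_one_add_exp _).deriv, neg_le_neg_iff]
  have := cosh_pos a
  gcongr
  exact cosh_le_cosh.2 (by rwa [abs_of_pos ha, abs_of_pos hb])

lemma inv_one_add_exp_tangent_le {m w : ℝ} (hm : 0 ≤ m) (hw : 0 ≤ w) :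
    (1 + exp m)⁻¹ - (w - m) / (2 * (1 + cosh m)) ≤ (1 + exp w)⁻¹ := by
  convert convexOn_inv_one_add_exp.add_deriv_mul_sub_le hm hw (hasDerivAt_inv_one_add_exp m)
    using 1
  ring

lemma inv_one_add_exp_eq_mul_inv_one_add_cosh (z : ℝ) :
    (1 + exp z)⁻¹ = (1 + exp (-z)) / 2 * (1 + cosh z)⁻¹ := by
  rw [cosh_eq, exp_neg]
  have := exp_pos z
  field_simp
  ring

lemma one_add_exp_neg_mul_sinh_div (z : ℝ) :
    (1 + exp (-z)) * (sinh z / (1 + cosh z)) = 1 - exp (-z) := by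
  rw [cosh_eq, sinh_eq, exp_neg]
  have := exp_pos z
  field_simp
  ring

lemma mul_exp_neg_le_self (z : ℝ) : z * exp (-z) ≤ z := by
  rcases le_total 0 z with hz | hz
  · exact mul_le_of_le_one_right hz (exp_le_one_iff.2 (neg_nonpos.2 hz))
  · nlinarith [one_le_exp (neg_nonneg.2 hz)]

lemma affine_le_inv_one_add_exp {m : ℝ} (hm : 0 ≤ m) (z : ℝ) :
    ((1 + exp m)⁻¹ + m * (2 * (1 + cosh m))⁻¹) / 2 * (1 + exp (-z))
      - (2 * (1 + cosh m))⁻¹ / 2 * (z - z * exp (-z)) ≤ (1 + exp z)⁻¹ := by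
  set s := z * sinh z / (1 + cosh z)
  have hs : 0 ≤ s := div_nonneg (mul_sinh_nonneg z) (by positivity)
  have hcosh : cosh z ≤ exp s := by
    rw [← exp_log (cosh_pos z)]
    exact exp_le_exp.2 (log_cosh_le_mul_sinh_div z)
  have hweight : (1 + exp (-z)) / 2 * s = (z - z * exp (-z)) / 2 := by
    linear_combination z / 2 * one_add_exp_neg_mul_sinh_div z
  calc _ = (1 + exp (-z)) / 2 * ((1 + exp m)⁻¹ - (s - m) / (2 * (1 + cosh m))) := by
        linear_combination (2 * (1 + cosh m))⁻¹ * hweight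
    _ ≤ (1 + exp (-z)) / 2 * (1 + exp s)⁻¹ := by
        gcongr
        exact inv_one_add_exp_tangent_le hm hs
    _ ≤ (1 + exp (-z)) / 2 * (1 + cosh z)⁻¹ := by
        have := cosh_pos z
        gcongr
    _ = (1 + exp z)⁻¹ := (inv_one_add_exp_eq_mul_inv_one_add_cosh z).symm

theorem stmt18_general
    {Ω : Type} [MeasurableSpace Ω]
    (P : Measure Ω) [IsProbabilityMeasure P]
    (Z : Ω → ℝ)
    (hZ_int : Integrable Z P)
    (hZ_exp_int : Integrable (fun ω => Real.exp (-Z ω)) P)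
    (hZ_mul_int : Integrable (fun ω => Z ω * Real.exp (-Z ω)) P)
    (h_exp : ∫ ω, Real.exp (-Z ω) ∂P = 1)
    (h_mul : ∫ ω, Z ω * Real.exp (-Z ω) ∂P = - ∫ ω, Z ω ∂P) :
    (1 + Real.exp (∫ ω, Z ω ∂P))⁻¹ ≤ ∫ ω, (1 + Real.exp (Z ω))⁻¹ ∂P ∧
    (∫ ω, (1 + Real.exp (Z ω))⁻¹ ∂P)⁻¹ ≤ 1 + Real.exp (∫ ω, Z ω ∂P) := by
  set m := ∫ ω, Z ω ∂P
  set c := (2 * (1 + cosh m))⁻¹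
  have hmass_int : Integrable (fun ω => 1 + exp (-Z ω)) P := (integrable_const 1).add hZ_exp_int
  have hmean_int : Integrable (fun ω => Z ω - Z ω * exp (-Z ω)) P := hZ_int.sub hZ_mul_int
  have hmass : ∫ ω, (1 + exp (-Z ω)) ∂P = 2 := by
    rw [integral_add (integrable_const 1) hZ_exp_int, h_exp, integral_const]
    norm_num
  have hmean : ∫ ω, (Z ω - Z ω * exp (-Z ω)) ∂P = 2 * m := by
    rw [integral_sub hZ_int hZ_mul_int, h_mul]
    ring
  have hm : 0 ≤ m := by
    have := integral_nonneg (μ := P) fun ω => sub_nonneg.2 (mul_exp_neg_le_self (Z ω))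
    linarith
  have hinv_int : Integrable (fun ω => (1 + exp (Z ω))⁻¹) P := by
    refine .of_bound ((by fun_prop : Continuous fun x => 1 + exp x).inv₀ (fun x => by positivity)
      |>.comp_aestronglyMeasurable hZ_int.aestronglyMeasurable) 1 (ae_of_all _ fun ω => ?_)
    rw [norm_inv, norm_of_nonneg (by positivity)]
    exact inv_le_one_of_one_le₀ (by linarith [exp_pos (Z ω)])
  have hbound : (1 + exp m)⁻¹ ≤ ∫ ω, (1 + exp (Z ω))⁻¹ ∂P := calc
    (1 + exp m)⁻¹ = ∫ ω, (((1 + exp m)⁻¹ + m * c) / 2 * (1 + exp (-Z ω))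
        - c / 2 * (Z ω - Z ω * exp (-Z ω))) ∂P := by
      rw [integral_sub (hmass_int.const_mul _) (hmean_int.const_mul _), integral_const_mul,
        integral_const_mul, hmass, hmean]
      ring
    _ ≤ _ := integral_mono ((hmass_int.const_mul _).sub (hmean_int.const_mul _)) hinv_int
        fun ω => affine_le_inv_one_add_exp hm (Z ω)
  exact ⟨hbound, by simpa using inv_anti₀ (by positivity) hbound⟩

theorem stmt18
    {Ω : Type} [MeasurableSpace Ω]
    (P : Measure Ω) [IsProbabilityMeasure P]
    (Z : Ω → ℝ) (hZ_meas : Measurable Z)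
    (hZ_int : Integrable Z P)
    (hZ_exp_int : Integrable (fun ω => Real.exp (-Z ω)) P)
    (hZ_mul_int : Integrable (fun ω => Z ω * Real.exp (-Z ω)) P)
    (h_exp : ∫ ω, Real.exp (-Z ω) ∂P = 1)
    (h_mul : ∫ ω, Z ω * Real.exp (-Z ω) ∂P = - ∫ ω, Z ω ∂P) :
    (1 + Real.exp (∫ ω, Z ω ∂P))⁻¹ ≤ ∫ ω, (1 + Real.exp (Z ω))⁻¹ ∂P ∧
    (∫ ω, (1 + Real.exp (Z ω))⁻¹ ∂P)⁻¹ ≤ 1 + Real.exp (∫ ω, Z ω ∂P) :=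
  stmt18_general P Z hZ_int hZ_exp_int hZ_mul_int h_exp h_mul
end

section
/- Reflection identity for the second moment (the identity E[G²] = 1/(2𝒩)). Let (Ω, 𝔉, P) be a probability space, R : Ω → Ω a measurable map with R∘R = id, and Z : Ω → ℝ a measurable function with Z∘R = −Z everywhere. Assume that the pushforward measure P∘R⁻¹ is absolutely continuous with respect to P with density e^{−Z}, i.e. ∫ f∘R dP = ∫ f·e^{−Z} dP for every bounded measurable f : Ω → ℝ. Then E[(1 + e^{Z})^{-2}] = (1/2)·E[(1 + e^{Z})^{-1}]. Equivalently, setting 𝒩 := E[(1 + e^{Z})^{-1}] and G := (1/𝒩)·(1 + e^{Z})^{-1}, one has E[G²] = 1/(2𝒩). -/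
/-!
Write `s z = (1 + e^z)⁻¹`, so that `s (-z) = 1 - s z` and `s (-z) e^{-z} = s z`. The function
`φ z = s z · s (-z)` is even, so the reflection formula applied to `φ ∘ Z` gives
`E[s(Z)²] = E[φ(Z) e^{-Z}] = E[φ(-Z)] = E[s(Z) - s(Z)²]`.
-/

open MeasureTheory Real

lemma inv_one_add_exp_neg (z : ℝ) : (1 + exp (-z))⁻¹ = 1 - (1 + exp z)⁻¹ := by
  rw [exp_neg]
  field_simp
  ring

lemma inv_one_add_exp_neg_mul_exp_neg (z : ℝ) :
    (1 + exp (-z))⁻¹ * exp (-z) = (1 + exp z)⁻¹ := by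
  rw [exp_neg]
  field_simp
  ring

lemma abs_inv_one_add_exp_le_one (z : ℝ) : |(1 + exp z)⁻¹| ≤ 1 := by
  rw [abs_of_pos (by positivity)]
  exact inv_le_one_of_one_le₀ (by linarith [exp_pos z])

lemma integrable_comp_of_abs_le {Ω : Type*} [MeasurableSpace Ω] {P : Measure Ω}
    [IsFiniteMeasure P] {Z : Ω → ℝ} (hZ : Measurable Z) {φ : ℝ → ℝ} (hφ : Measurable φ)
    {C : ℝ} (hC : ∀ z, |φ z| ≤ C) : Integrable (fun ω => φ (Z ω)) P :=
  .of_bound (hφ.comp hZ).aestronglyMeasurable C (.of_forall fun ω => hC (Z ω))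

lemma integral_comp_neg_eq_integral_mul_exp_neg {Ω : Type*} [MeasurableSpace Ω]
    {P : Measure Ω} {R : Ω → Ω} {Z : Ω → ℝ} (hZ : Measurable Z) (hZR : ∀ ω, Z (R ω) = -Z ω)
    (h_push : ∀ f : Ω → ℝ, Measurable f → (∃ C : ℝ, ∀ ω, |f ω| ≤ C) →
      ∫ ω, f (R ω) ∂P = ∫ ω, f ω * exp (-Z ω) ∂P)
    {φ : ℝ → ℝ} (hφ : Measurable φ) {C : ℝ} (hC : ∀ z, |φ z| ≤ C) :
    ∫ ω, φ (-Z ω) ∂P = ∫ ω, φ (Z ω) * exp (-Z ω) ∂P := by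
  simpa only [hZR] using h_push (fun ω => φ (Z ω)) (hφ.comp hZ) ⟨C, fun ω => hC (Z ω)⟩

theorem stmt19_general
    {Ω : Type} [MeasurableSpace Ω]
    (P : Measure Ω) [IsProbabilityMeasure P]
    (R : Ω → Ω)
    (Z : Ω → ℝ) (hZ_meas : Measurable Z)
    (hZR : ∀ ω, Z (R ω) = - Z ω)
    (h_push : ∀ f : Ω → ℝ, Measurable f → (∃ C : ℝ, ∀ ω, |f ω| ≤ C) →
      ∫ ω, f (R ω) ∂P = ∫ ω, f ω * Real.exp (-Z ω) ∂P) :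
    ∫ ω, ((1 + Real.exp (Z ω))⁻¹) ^ 2 ∂P
      = (1 / 2) * ∫ ω, (1 + Real.exp (Z ω))⁻¹ ∂P := by
  have hs : Measurable fun z : ℝ => (1 + exp z)⁻¹ := by fun_prop
  have hφ : Measurable fun z : ℝ => (1 + exp z)⁻¹ * (1 + exp (-z))⁻¹ := by fun_prop
  have hφ_le (z : ℝ) : |(1 + exp z)⁻¹ * (1 + exp (-z))⁻¹| ≤ 1 := by
    rw [abs_mul]
    exact mul_le_one₀ (abs_inv_one_add_exp_le_one z) (abs_nonneg _)
      (abs_inv_one_add_exp_le_one (-z))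
  have hs_sq_le (z : ℝ) : |((1 + exp z)⁻¹) ^ 2| ≤ 1 := by
    rw [abs_pow]
    exact pow_le_one₀ (abs_nonneg _) (abs_inv_one_add_exp_le_one z)
  have h : ∫ ω, ((1 + exp (Z ω))⁻¹) ^ 2 ∂P
      = ∫ ω, (1 + exp (Z ω))⁻¹ ∂P - ∫ ω, ((1 + exp (Z ω))⁻¹) ^ 2 ∂P := calc
    _ = ∫ ω, (1 + exp (Z ω))⁻¹ * (1 + exp (-Z ω))⁻¹ * exp (-Z ω) ∂P := by
      simp only [mul_assoc, inv_one_add_exp_neg_mul_exp_neg, sq]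
    _ = ∫ ω, (1 + exp (-Z ω))⁻¹ * (1 + exp (-(-Z ω)))⁻¹ ∂P :=
      (integral_comp_neg_eq_integral_mul_exp_neg hZ_meas hZR h_push hφ hφ_le).symm
    _ = ∫ ω, ((1 + exp (Z ω))⁻¹ - ((1 + exp (Z ω))⁻¹) ^ 2) ∂P := by
      simp only [neg_neg, inv_one_add_exp_neg]
      ring_nf
    _ = _ := integral_sub (integrable_comp_of_abs_le hZ_meas hs abs_inv_one_add_exp_le_one)
      (integrable_comp_of_abs_le hZ_meas (hs.pow_const 2) hs_sq_le)
  linarith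

theorem stmt19
    {Ω : Type} [MeasurableSpace Ω]
    (P : Measure Ω) [IsProbabilityMeasure P]
    (R : Ω → Ω) (hR_meas : Measurable R)
    (hR_inv : R ∘ R = id)
    (Z : Ω → ℝ) (hZ_meas : Measurable Z)
    (hZR : ∀ ω, Z (R ω) = - Z ω)
    (h_push : ∀ f : Ω → ℝ, Measurable f → (∃ C : ℝ, ∀ ω, |f ω| ≤ C) →
      ∫ ω, f (R ω) ∂P = ∫ ω, f ω * Real.exp (-Z ω) ∂P) :
    ∫ ω, ((1 + Real.exp (Z ω))⁻¹) ^ 2 ∂P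
      = (1 / 2) * ∫ ω, (1 + Real.exp (Z ω))⁻¹ ∂P :=
  stmt19_general P R Z hZ_meas hZR h_push
end
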